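/- arXiv:1803.00666 — 6 statements merged into one kernel-verified Lean document; each statement's English description precedes it below -/
import Mathlib

section
/- Let Gt = (V, E, {f_v}) be a general threshold instance whose underlying graph is a layered graph with layers V_1, …, V_m. Then for every node v ∈ V \ V_m and every seed set S_m ⊆ V_m, the activation probability satisfies the recursion P_v(S_m) = ∑_{S_{m-1} ⊆ V_{m-1}} ∏_{u ∈ S_{m-1}} f_u(S_m) · ∏_{u ∈ V_{m-1} \ S_{m-1}} (1 − f_u(S_m)) · P_v(S_{m-1}), where P_v(S_{m-1}) is the probability that v becomes active under the diffusion restricted to layers V_1, …, V_{m-1} started from seed set S_{m-1}. -/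
open MeasureTheory Finset
open scoped Classical

noncomputable section


/-- The difference of a set function `f` over a set `A`, evaluated at `S`:
`Δ_A f(S) = ∑_{B ⊆ A} (-1)^{|B|} f(S ∪ (A \ B))`. -/
def adDiff {V : Type*} [DecidableEq V] (f : Finset V → ℝ) (A S : Finset V) : ℝ :=
  ∑ B ∈ A.powerset, (-1 : ℝ) ^ B.card * f (S ∪ (A \ B))

/-- A set function `f : 2^V → ℝ` is AD-`k` if `(-1)^{|A|+1} Δ_A f(S) ≥ 0` for every
nonempty `A` with `|A| ≤ k` and every `S`. -/
def IsADk {V : Type*} [DecidableEq V] (f : Finset V → ℝ) (k : ℕ) : Prop :=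
  ∀ A S : Finset V, A.Nonempty → A.card ≤ k →
    0 ≤ (-1 : ℝ) ^ (A.card + 1) * adDiff f A S



/-- A general threshold instance on a finite directed graph `(V, E)`:
each node `v` has a threshold function `f v : 2^V → [0,1]` that is monotone,
vanishes on `∅`, and depends only on the in-neighbors of `v`. -/
structure GTInstance (V : Type*) [Fintype V] [DecidableEq V] where
  E : V → V → Prop
  f : V → Finset V → ℝ
  f_nonneg : ∀ v S, 0 ≤ f v S
  f_le_one : ∀ v S, f v S ≤ 1
  f_mono : ∀ v, Monotone (f v)
  f_empty : ∀ v, f v ∅ = 0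
  f_local : ∀ v S, f v S = f v (S.filter fun u => E u v)

variable {V : Type*} [Fintype V] [DecidableEq V]

/-- The deterministic cascade for threshold vector `θ` and seed set `S`:
`C_0 = S`, `C_{t+1} = C_t ∪ {v : f_v(C_t) ≥ θ_v}`. -/
def cascade (gt : GTInstance V) (θ : V → ℝ) (S : Finset V) : ℕ → Finset V
  | 0 => S
  | t + 1 =>
      cascade gt θ S t ∪ Finset.univ.filter fun v => θ v ≤ gt.f v (cascade gt θ S t)

/-- The final active set of the cascade. -/
def finalSet (gt : GTInstance V) (θ : V → ℝ) (S : Finset V) : Finset V :=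
  cascade gt θ S (Fintype.card V)

/-- The uniform (Lebesgue product) probability measure on `[0,1]^V`. -/
def cubeMeasure (V : Type*) [Fintype V] : Measure (V → ℝ) :=
  Measure.pi fun _ => volume.restrict (Set.Icc 0 1)

/-- `activationProb gt v S` is the probability (over uniform thresholds) that `v`
is active at the end of the diffusion started from seed set `S`. -/
def activationProb (gt : GTInstance V) (v : V) (S : Finset V) : ℝ :=
  (cubeMeasure V {θ | v ∈ finalSet gt θ S}).toReal

/-- The spread function `σ(S) = ∑_{v ∈ V} P_v(S)`. -/
def spread (gt : GTInstance V) (S : Finset V) : ℝ :=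
  ∑ v : V, activationProb gt v S

/-- The underlying graph is a layered graph with `m ≥ 2` layers (layer indices `1, …, m`),
all edges going from a node of layer `i+1` to a node of layer `i`. -/
def IsLayered (gt : GTInstance V) (m : ℕ) (layer : V → ℕ) : Prop :=
  2 ≤ m ∧ (∀ v, 1 ≤ layer v ∧ layer v ≤ m) ∧
    ∀ u v, gt.E u v → layer u = layer v + 1

/-- The underlying graph is a directed acyclic graph (no directed cycles). -/
def IsDAG (gt : GTInstance V) : Prop := ∀ v, ¬ Relation.TransGen gt.E v v



/-! ### Auxiliary lemmas -/

namespace AuxGT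

lemma nu_prob : IsProbabilityMeasure (volume.restrict (Set.Icc (0:ℝ) 1)) := by
  constructor
  rw [Measure.restrict_apply_univ, Real.volume_Icc]
  norm_num

lemma nu_Iic {a : ℝ} (h0 : 0 ≤ a) (h1 : a ≤ 1) :
    (volume.restrict (Set.Icc (0:ℝ) 1)) (Set.Iic a) = ENNReal.ofReal a := by
  rw [Measure.restrict_apply measurableSet_Iic]
  have h : Set.Iic a ∩ Set.Icc 0 1 = Set.Icc 0 a := by
    ext x
    simp only [Set.mem_inter_iff, Set.mem_Iic, Set.mem_Icc]
    constructor
    · rintro ⟨ha, hb, hc⟩; exact ⟨hb, ha⟩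
    · rintro ⟨hb, hc⟩; exact ⟨hc, hb, by linarith⟩
  rw [h, Real.volume_Icc]
  norm_num

lemma nu_Ioi {a : ℝ} (h0 : 0 ≤ a) (h1 : a ≤ 1) :
    (volume.restrict (Set.Icc (0:ℝ) 1)) (Set.Ioi a) = ENNReal.ofReal (1 - a) := by
  rw [Measure.restrict_apply measurableSet_Ioi]
  have h : Set.Ioi a ∩ Set.Icc 0 1 = Set.Ioc a 1 := by
    ext x
    simp only [Set.mem_inter_iff, Set.mem_Ioi, Set.mem_Icc, Set.mem_Ioc]
    constructor
    · rintro ⟨ha, hb, hc⟩; exact ⟨ha, hc⟩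
    · rintro ⟨hb, hc⟩; exact ⟨hb, by linarith, hc⟩
  rw [h, Real.volume_Ioc]

variable {V : Type*} [Fintype V] [DecidableEq V]

lemma cube_prob : IsProbabilityMeasure (cubeMeasure V) := by
  haveI := nu_prob
  unfold cubeMeasure
  infer_instance

lemma cube_pos_ae : cubeMeasure V {θ | ¬ ∀ w, 0 < θ w} = 0 := by
  have h : {θ : V → ℝ | ¬ ∀ w, 0 < θ w} = ⋃ w : V, {θ | θ w ≤ 0} := by
    ext θ
    simp only [Set.mem_setOf_eq, not_forall, not_lt, Set.mem_iUnion]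
  rw [h]
  refine measure_iUnion_null fun w => ?_
  have h2 : {θ : V → ℝ | θ w ≤ 0} =
      Set.pi Set.univ (fun i => if i = w then Set.Iic 0 else Set.univ) := by
    ext θ
    simp only [Set.mem_setOf_eq, Set.mem_pi, Set.mem_univ, true_implies]
    constructor
    · intro h i
      by_cases hi : i = w
      · subst hi; simpa using h
      · simp [hi]
    · intro h
      have := h w
      simpa using this
  rw [h2, cubeMeasure, Measure.pi_pi]
  refine Finset.prod_eq_zero (Finset.mem_univ w) ?_
  simp only [eq_self_iff_true, if_true]
  rw [Measure.restrict_apply measurableSet_Iic]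
  have h3 : Set.Iic (0:ℝ) ∩ Set.Icc 0 1 = {0} := by
    ext x
    simp only [Set.mem_inter_iff, Set.mem_Iic, Set.mem_Icc, Set.mem_singleton_iff]
    constructor
    · rintro ⟨ha, hb, hc⟩; linarith
    · rintro rfl; norm_num
  rw [h3, Real.volume_singleton]

lemma cube_pos_aee : ∀ᵐ θ ∂(cubeMeasure V), ∀ w, 0 < θ w := by
  rw [ae_iff]
  exact cube_pos_ae

lemma cascade_succ (gt : GTInstance V) (θ : V → ℝ) (S : Finset V) (t : ℕ) :
    cascade gt θ S (t+1) =
      cascade gt θ S t ∪ Finset.univ.filter fun v => θ v ≤ gt.f v (cascade gt θ S t) := rfl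

lemma subset_cascade (gt : GTInstance V) (θ : V → ℝ) (S : Finset V) :
    ∀ t, S ⊆ cascade gt θ S t
  | 0 => Finset.Subset.refl _
  | t + 1 => (subset_cascade gt θ S t).trans Finset.subset_union_left

lemma cascade_mono_succ (gt : GTInstance V) (θ : V → ℝ) (S : Finset V) (t : ℕ) :
    cascade gt θ S t ⊆ cascade gt θ S (t+1) := Finset.subset_union_left

lemma cascade_card_ge (gt : GTInstance V) (θ : V → ℝ) (S : Finset V) :
    ∀ t, (∀ s < t, cascade gt θ S (s+1) ≠ cascade gt θ S s) →
      t ≤ (cascade gt θ S t).card := by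
  intro t
  induction t with
  | zero => intro _; omega
  | succ t ih =>
    intro h
    have h1 : t ≤ (cascade gt θ S t).card := ih fun s hs => h s (by omega)
    have h2 : cascade gt θ S t ⊂ cascade gt θ S (t+1) :=
      (Finset.ssubset_iff_of_subset (cascade_mono_succ gt θ S t)).2 (by
        by_contra hc
        push_neg at hc
        exact h t (by omega) (Finset.Subset.antisymm (fun x hx => by
          by_contra hx'
          exact absurd (hc x hx) (by simp [hx'])) (cascade_mono_succ gt θ S t)))
    have := Finset.card_lt_card h2
    omega

lemma cascade_stab (gt : GTInstance V) (θ : V → ℝ) (S : Finset V) {s : ℕ}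
    (h : cascade gt θ S (s+1) = cascade gt θ S s) :
    ∀ k, cascade gt θ S (s+k) = cascade gt θ S s := by
  intro k
  induction k with
  | zero => rfl
  | succ k ih =>
    have hh : s + (k+1) = (s+k) + 1 := by omega
    rw [hh, cascade_succ, ih, ← cascade_succ, h]

lemma cascade_eq_finalSet (gt : GTInstance V) (θ : V → ℝ) (S : Finset V) (k : ℕ) :
    cascade gt θ S (Fintype.card V + k) = finalSet gt θ S := by
  have hex : ∃ s, s ≤ Fintype.card V ∧ cascade gt θ S (s+1) = cascade gt θ S s := by
    by_contra h
    push_neg at h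
    have h1 := cascade_card_ge gt θ S (Fintype.card V + 1)
      (fun s hs => h s (by omega))
    have h2 : (cascade gt θ S (Fintype.card V + 1)).card ≤ Fintype.card V :=
      Finset.card_le_univ _
    omega
  obtain ⟨s, hs, hstep⟩ := hex
  have h1 : cascade gt θ S (Fintype.card V + k) = cascade gt θ S s := by
    have hh : Fintype.card V + k = s + (Fintype.card V + k - s) := by omega
    rw [hh, cascade_stab gt θ S hstep]
  have h2 : cascade gt θ S (Fintype.card V) = cascade gt θ S s := by
    have hh : Fintype.card V = s + (Fintype.card V - s) := by omega
    rw [hh, cascade_stab gt θ S hstep]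
  rw [h1, finalSet, h2]

lemma meas_le_set (w : V) (c : ℝ) : MeasurableSet {θ : V → ℝ | θ w ≤ c} :=
  measurableSet_le (measurable_pi_apply w) measurable_const

lemma meas_cascade (gt : GTInstance V) (S : Finset V) : ∀ t (C : Finset V),
    MeasurableSet {θ : V → ℝ | cascade gt θ S t = C} := by
  intro t
  induction t with
  | zero =>
    intro C
    by_cases h : S = C
    · have : {θ : V → ℝ | cascade gt θ S 0 = C} = Set.univ := by
        ext θ; simp only [Set.mem_setOf_eq, Set.mem_univ, iff_true]; exact h
      rw [this]; exact MeasurableSet.univ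
    · have : {θ : V → ℝ | cascade gt θ S 0 = C} = ∅ := by
        ext θ; simp only [Set.mem_setOf_eq, Set.mem_empty_iff_false, iff_false]; exact h
      rw [this]; exact MeasurableSet.empty
  | succ t ih =>
    intro C
    have hrw : {θ : V → ℝ | cascade gt θ S (t+1) = C} =
        ⋃ D : Finset V, ({θ | cascade gt θ S t = D} ∩
          {θ | D ∪ Finset.univ.filter (fun w => θ w ≤ gt.f w D) = C}) := by
      ext θ
      simp only [Set.mem_iUnion, Set.mem_inter_iff, Set.mem_setOf_eq]
      constructor
      · intro h
        exact ⟨cascade gt θ S t, rfl, by rw [← h, cascade_succ]⟩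
      · rintro ⟨D, hD, h⟩
        rw [cascade_succ, hD, h]
    rw [hrw]
    refine MeasurableSet.iUnion fun D => (ih D).inter ?_
    have hrw2 : {θ : V → ℝ | D ∪ Finset.univ.filter (fun w => θ w ≤ gt.f w D) = C} =
        ⋂ w : V, {θ | (w ∈ D ∨ θ w ≤ gt.f w D) ↔ w ∈ C} := by
      ext θ
      simp only [Set.mem_iInter, Set.mem_setOf_eq, Finset.ext_iff, Finset.mem_union,
        Finset.mem_filter, Finset.mem_univ, true_and]
    rw [hrw2]
    refine MeasurableSet.iInter fun w => ?_
    by_cases hC : w ∈ C <;> by_cases hD : w ∈ D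
    · simp only [hC, hD, true_or, iff_true, Set.setOf_true]; exact MeasurableSet.univ
    · simp only [hC, hD, false_or, iff_true]; exact meas_le_set w _
    · simp only [hC, hD, true_or, iff_false, not_true, Set.setOf_false]
      exact MeasurableSet.empty
    · simp only [hC, hD, false_or, iff_false]
      exact (meas_le_set w _).compl

lemma meas_final (gt : GTInstance V) (S : Finset V) (v : V) :
    MeasurableSet {θ : V → ℝ | v ∈ finalSet gt θ S} := by
  have h : {θ : V → ℝ | v ∈ finalSet gt θ S} =
      ⋃ (C : Finset V) (_ : v ∈ C), {θ | cascade gt θ S (Fintype.card V) = C} := by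
    ext θ
    simp only [Set.mem_iUnion, Set.mem_setOf_eq, finalSet]
    constructor
    · intro h; exact ⟨_, h, rfl⟩
    · rintro ⟨C, hvC, h⟩; rw [h]; exact hvC
  rw [h]
  exact MeasurableSet.iUnion fun C => MeasurableSet.iUnion fun _ => meas_cascade gt S _ C

section Layered

variable (gt : GTInstance V) (m : ℕ) (layer : V → ℕ)

lemma f_zero_of_filter_empty (w : V) (A : Finset V)
    (h : A.filter (fun u => gt.E u w) = ∅) : gt.f w A = 0 := by
  rw [gt.f_local, h, gt.f_empty]

variable (hlay : IsLayered gt m layer)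
include hlay

lemma no_high {θ : V → ℝ} (hθ : ∀ w, 0 < θ w) {T : Finset V}
    (hT : ∀ u ∈ T, layer u = m - 1) :
    ∀ t, ∀ w ∈ cascade gt θ T t, layer w ≠ m := by
  intro t
  induction t with
  | zero =>
    intro w hw hm
    have := hT w hw
    have := hlay.1
    omega
  | succ t ih =>
    intro w hw hm
    rw [cascade_succ, Finset.mem_union, Finset.mem_filter] at hw
    rcases hw with hw | ⟨-, hw⟩
    · exact ih w hw hm
    · have hz : gt.f w (cascade gt θ T t) = 0 := by
        apply f_zero_of_filter_empty
        ext u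
        simp only [Finset.mem_filter, Finset.notMem_empty, iff_false, not_and]
        intro hu hE
        have h1 := hlay.2.2 u w hE
        have h2 := (hlay.2.1 u).2
        omega
      rw [hz] at hw
      exact absurd hw (not_le.2 (hθ w))

lemma layer_m1_mem {θ : V → ℝ} (hθ : ∀ w, 0 < θ w) {T : Finset V}
    (hT : ∀ u ∈ T, layer u = m - 1) :
    ∀ t, ∀ w, layer w = m - 1 → (w ∈ cascade gt θ T t ↔ w ∈ T) := by
  intro t
  induction t with
  | zero => intro w _; rfl
  | succ t ih =>
    intro w hw
    rw [cascade_succ, Finset.mem_union, Finset.mem_filter]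
    constructor
    · rintro (h | ⟨-, h⟩)
      · exact (ih w hw).1 h
      · exfalso
        have hz : gt.f w (cascade gt θ T t) = 0 := by
          apply f_zero_of_filter_empty
          ext u
          simp only [Finset.mem_filter, Finset.notMem_empty, iff_false, not_and]
          intro hu hE
          have h1 := hlay.2.2 u w hE
          have h2 : layer u ≠ m := no_high gt m layer hlay hθ hT t u hu
          have := hlay.1
          omega
        rw [hz] at h
        exact absurd h (not_le.2 (hθ w))
    · intro h
      exact Or.inl ((ih w hw).2 h)

end Layered

def Tset (gt : GTInstance V) (m : ℕ) (layer : V → ℕ) (θ : V → ℝ) (Sm : Finset V) : Finset V :=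
  Finset.univ.filter (fun u => layer u = m - 1 ∧ θ u ≤ gt.f u Sm)

section Layered2

variable (gt : GTInstance V) (m : ℕ) (layer : V → ℕ)

lemma Tset_layer (θ : V → ℝ) (Sm : Finset V) :
    ∀ u ∈ Tset gt m layer θ Sm, layer u = m - 1 := by
  intro u hu; simp only [Tset, Finset.mem_filter] at hu; exact hu.2.1

variable (hlay : IsLayered gt m layer)
include hlay

lemma decomp {θ : V → ℝ} (hθ : ∀ w, 0 < θ w) {Sm : Finset V}
    (hSm : ∀ u ∈ Sm, layer u = m) :
    ∀ t, cascade gt θ Sm (t+1) = Sm ∪ cascade gt θ (Tset gt m layer θ Sm) t := by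
  have hm := hlay.1
  have hTl := Tset_layer gt m layer θ Sm
  have hvan : ∀ w, layer w ≠ m - 1 → ∀ A : Finset V,
      (∀ u ∈ A, layer u = m ∨ layer u ≠ layer w + 1) → gt.f w A = 0 := by
    intro w hw A hA
    apply f_zero_of_filter_empty
    ext u
    simp only [Finset.mem_filter, Finset.notMem_empty, iff_false, not_and]
    intro hu hE
    have h1 := hlay.2.2 u w hE
    have h2 := (hlay.2.1 u).2
    have h3 := (hlay.2.1 w).2
    rcases hA u hu with h | h
    · omega
    · exact h h1
  intro t
  induction t with
  | zero =>
    rw [cascade_succ]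
    show Sm ∪ _ = Sm ∪ Tset gt m layer θ Sm
    congr 1
    ext w
    simp only [Finset.mem_filter, Finset.mem_univ, true_and, Tset]
    show θ w ≤ gt.f w (Sm) ↔ _
    constructor
    · intro h
      by_cases hw : layer w = m - 1
      · exact ⟨hw, h⟩
      · exfalso
        have : gt.f w Sm = 0 := hvan w hw Sm (fun u hu => Or.inl (hSm u hu))
        rw [this] at h
        exact absurd h (not_le.2 (hθ w))
    · exact fun h => h.2
  | succ t ih =>
    rw [cascade_succ, ih, cascade_succ (S := Tset gt m layer θ Sm)]
    set C := cascade gt θ (Tset gt m layer θ Sm) t with hC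
    have hCno : ∀ u ∈ C, layer u ≠ m := fun u hu => no_high gt m layer hlay hθ hTl t u hu
    have hTC : Tset gt m layer θ Sm ⊆ C := subset_cascade gt θ _ t
    ext w
    simp only [Finset.mem_union, Finset.mem_filter, Finset.mem_univ, true_and]
    by_cases hw : layer w = m - 1
    · have hf : gt.f w (Sm ∪ C) = gt.f w Sm := by
        rw [gt.f_local, gt.f_local w Sm]
        congr 1
        ext u
        simp only [Finset.mem_filter, Finset.mem_union]
        constructor
        · rintro ⟨h | h, hE⟩
          · exact ⟨h, hE⟩
          · exfalso
            have h1 := hlay.2.2 u w hE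
            exact hCno u h (by omega)
        · exact fun ⟨h, hE⟩ => ⟨Or.inl h, hE⟩
      have hfC : gt.f w C = 0 := by
        apply f_zero_of_filter_empty
        ext u
        simp only [Finset.mem_filter, Finset.notMem_empty, iff_false, not_and]
        intro hu hE
        have h1 := hlay.2.2 u w hE
        exact hCno u hu (by omega)
      rw [hf, hfC]
      constructor
      · rintro ((h | h) | h)
        · exact Or.inl h
        · exact Or.inr (Or.inl h)
        · refine Or.inr (Or.inl (hTC ?_))
          simp only [Tset, Finset.mem_filter, Finset.mem_univ, true_and]
          exact ⟨hw, h⟩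
      · rintro (h | h | h)
        · exact Or.inl (Or.inl h)
        · exact Or.inl (Or.inr h)
        · exact absurd h (not_le.2 (hθ w))
    · have hf : gt.f w (Sm ∪ C) = gt.f w C := by
        rw [gt.f_local, gt.f_local w C]
        congr 1
        ext u
        simp only [Finset.mem_filter, Finset.mem_union]
        constructor
        · rintro ⟨h | h, hE⟩
          · exfalso
            have h1 := hlay.2.2 u w hE
            have h2 := hSm u h
            omega
          · exact ⟨h, hE⟩
        · exact fun ⟨h, hE⟩ => ⟨Or.inr h, hE⟩
      rw [hf]
      tauto

lemma finalSet_decomp {θ : V → ℝ} (hθ : ∀ w, 0 < θ w) {Sm : Finset V}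
    (hSm : ∀ u ∈ Sm, layer u = m) {v : V} (hv : layer v ≠ m) :
    v ∈ finalSet gt θ Sm ↔ v ∈ finalSet gt θ (Tset gt m layer θ Sm) := by
  have h1 : finalSet gt θ Sm = cascade gt θ Sm (Fintype.card V + 1) :=
    (cascade_eq_finalSet gt θ Sm 1).symm
  rw [h1, decomp gt m layer hlay hθ hSm (Fintype.card V), Finset.mem_union]
  simp only [finalSet]
  constructor
  · rintro (h | h)
    · exact absurd (hSm v h) hv
    · exact h
  · exact Or.inr

lemma invariance {θ θ' : V → ℝ} (hθ : ∀ w, 0 < θ w) (hθ' : ∀ w, 0 < θ' w)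
    (hagree : ∀ w, layer w ≠ m - 1 → θ w = θ' w) {T : Finset V}
    (hT : ∀ u ∈ T, layer u = m - 1) :
    ∀ t, cascade gt θ T t = cascade gt θ' T t := by
  have hm := hlay.1
  intro t
  induction t with
  | zero => rfl
  | succ t ih =>
    rw [cascade_succ, cascade_succ, ih]
    congr 1
    ext w
    simp only [Finset.mem_filter, Finset.mem_univ, true_and]
    set C := cascade gt θ' T t with hC
    have hCno : ∀ u ∈ C, layer u ≠ m := fun u hu =>
      no_high gt m layer hlay hθ' hT t u hu
    by_cases hw : layer w = m - 1
    · have hfC : gt.f w C = 0 := by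
        apply f_zero_of_filter_empty
        ext u
        simp only [Finset.mem_filter, Finset.notMem_empty, iff_false, not_and]
        intro hu hE
        have h1 := hlay.2.2 u w hE
        exact hCno u hu (by omega)
      rw [hfC]
      constructor
      · intro h; exact absurd h (not_le.2 (hθ w))
      · intro h; exact absurd h (not_le.2 (hθ' w))
    · rw [hagree w hw]

end Layered2


section MeasureAB

variable (gt : GTInstance V) (m : ℕ) (layer : V → ℕ)

def Aset (Sm T : Finset V) : Set (V → ℝ) :=
  {θ | ∀ u, layer u = m - 1 → (θ u ≤ gt.f u Sm ↔ u ∈ T)}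

def Bset (v : V) (T : Finset V) : Set (V → ℝ) :=
  {θ | v ∈ finalSet gt θ T}

lemma meas_Aset (Sm T : Finset V) : MeasurableSet (Aset gt m layer Sm T) := by
  have h : Aset gt m layer Sm T =
      ⋂ u : V, {θ : V → ℝ | layer u = m - 1 → (θ u ≤ gt.f u Sm ↔ u ∈ T)} := by
    ext θ; simp only [Aset, Set.mem_setOf_eq, Set.mem_iInter]
  rw [h]
  refine MeasurableSet.iInter fun u => ?_
  by_cases hu : layer u = m - 1
  · by_cases hT : u ∈ T
    · have : {θ : V → ℝ | layer u = m - 1 → (θ u ≤ gt.f u Sm ↔ u ∈ T)} =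
          {θ : V → ℝ | θ u ≤ gt.f u Sm} := by
        ext θ; simp [hu, hT]
      rw [this]; exact meas_le_set u _
    · have : {θ : V → ℝ | layer u = m - 1 → (θ u ≤ gt.f u Sm ↔ u ∈ T)} =
          {θ : V → ℝ | θ u ≤ gt.f u Sm}ᶜ := by
        ext θ; simp [hu, hT]
      rw [this]; exact (meas_le_set u _).compl
  · have : {θ : V → ℝ | layer u = m - 1 → (θ u ≤ gt.f u Sm ↔ u ∈ T)} = Set.univ := by
      ext θ; simp [hu]
    rw [this]; exact MeasurableSet.univ

lemma meas_Bset (v : V) (T : Finset V) : MeasurableSet (Bset gt v T) :=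
  meas_final gt T v

lemma measure_AB (hlay : IsLayered gt m layer)
    (v : V) (Sm : Finset V) (T : Finset V) (hT : ∀ u ∈ T, layer u = m - 1) :
    cubeMeasure V (Aset gt m layer Sm T ∩ Bset gt v T) =
      ((∏ u ∈ T, ENNReal.ofReal (gt.f u Sm)) *
        ∏ u ∈ (Finset.univ.filter fun u => layer u = m - 1) \ T,
          ENNReal.ofReal (1 - gt.f u Sm)) *
        cubeMeasure V (Bset gt v T) := by
  classical
  set p : V → Prop := fun u => layer u = m - 1 with hp
  set ν := volume.restrict (Set.Icc (0:ℝ) 1) with hν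
  haveI : IsProbabilityMeasure ν := nu_prob
  set e := MeasurableEquiv.piEquivPiSubtypeProd (fun _ : V => ℝ) p with he
  have hmp : MeasurePreserving e (cubeMeasure V)
      ((Measure.pi fun _ : Subtype p => ν).prod
        (Measure.pi fun _ : {u // ¬ p u} => ν)) :=
    measurePreserving_piEquivPiSubtypeProd (fun _ => ν) p
  set A' : Set (Subtype p → ℝ) :=
    Set.univ.pi (fun u : Subtype p =>
      if u.1 ∈ T then Set.Iic (gt.f u.1 Sm) else Set.Ioi (gt.f u.1 Sm)) with hA'
  set B' : Set ({u // ¬ p u} → ℝ) :=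
    {τ | v ∈ finalSet gt (e.symm ((fun _ => 1), τ)) T} with hB'
  have measA' : MeasurableSet A' := by
    refine MeasurableSet.univ_pi fun u => ?_
    by_cases h : u.1 ∈ T
    · simp only [h, if_true]; exact measurableSet_Iic
    · simp only [h, if_false]; exact measurableSet_Ioi
  have measB' : MeasurableSet B' := by
    have h : B' = (fun τ : {u // ¬ p u} → ℝ =>
        e.symm ((fun _ => (1:ℝ)), τ)) ⁻¹' (Bset gt v T) := rfl
    rw [h]
    exact (e.symm.measurable.comp (measurable_const.prodMk measurable_id))
      (meas_Bset gt v T)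
  -- pointwise identification of the first component
  have hAiff : ∀ θ : V → ℝ, θ ∈ Aset gt m layer Sm T ↔ (fun u : Subtype p => θ u) ∈ A' := by
    intro θ
    simp only [Aset, Set.mem_setOf_eq, hA', Set.mem_pi, Set.mem_univ, true_implies]
    constructor
    · intro h u
      by_cases hu : u.1 ∈ T
      · simp only [hu, if_true, Set.mem_Iic]
        exact (h u.1 u.2).2 hu
      · simp only [hu, if_false, Set.mem_Ioi]
        by_contra hc
        push_neg at hc
        exact hu ((h u.1 u.2).1 hc)
    · intro h u hu
      have := h ⟨u, hu⟩
      by_cases hT' : u ∈ T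
      · simp only [hT', if_true, Set.mem_Iic] at this
        exact ⟨fun _ => hT', fun _ => this⟩
      · simp only [hT', if_false, Set.mem_Ioi] at this
        exact ⟨fun hc => absurd hc (not_le.2 this), fun hc => absurd hc hT'⟩
  -- pointwise identification of the second component, for positive θ
  have hBiff : ∀ θ : V → ℝ, (∀ w, 0 < θ w) →
      (θ ∈ Bset gt v T ↔ (fun u : {u // ¬ p u} => θ u) ∈ B') := by
    intro θ hθ
    set θ' : V → ℝ := e.symm ((fun _ => 1), (fun u : {u // ¬ p u} => θ u)) with hθ'def
    have hθ'eq : ∀ w, θ' w = if h : p w then 1 else θ w := fun w => rfl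
    have hθ'pos : ∀ w, 0 < θ' w := by
      intro w
      rw [hθ'eq]
      by_cases h : p w
      · rw [dif_pos h]; norm_num
      · rw [dif_neg h]; exact hθ w
    have hagree : ∀ w, layer w ≠ m - 1 → θ w = θ' w := by
      intro w hw
      have h2 : ¬ p w := hw
      rw [hθ'eq, dif_neg h2]
    have hcas : cascade gt θ T (Fintype.card V) = cascade gt θ' T (Fintype.card V) :=
      invariance gt m layer hlay hθ hθ'pos hagree hT (Fintype.card V)
    simp only [Bset, Set.mem_setOf_eq, hB', finalSet]
    rw [hcas]
  have hpos := cube_pos_aee (V := V)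
  have heapp : ∀ θ : V → ℝ,
      e θ = ((fun u : Subtype p => θ u), (fun u : {u // ¬ p u} => θ u)) := fun θ => rfl
  -- μ(A ∩ B) = μ(e⁻¹(A' ×ˢ B'))
  have h1 : cubeMeasure V (Aset gt m layer Sm T ∩ Bset gt v T) =
      cubeMeasure V (e ⁻¹' (A' ×ˢ B')) := by
    apply measure_congr
    rw [Filter.eventuallyEq_set]
    filter_upwards [hpos] with θ hθ
    simp only [Set.mem_inter_iff, Set.mem_preimage, Set.mem_prod, heapp θ]
    rw [hAiff θ, hBiff θ hθ]
  have h3 : cubeMeasure V (Bset gt v T) =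
      cubeMeasure V (e ⁻¹' ((Set.univ : Set (Subtype p → ℝ)) ×ˢ B')) := by
    apply measure_congr
    rw [Filter.eventuallyEq_set]
    filter_upwards [hpos] with θ hθ
    simp only [Set.mem_preimage, Set.mem_prod, Set.mem_univ, true_and, heapp θ]
    rw [hBiff θ hθ]
  rw [h1, h3, hmp.measure_preimage (measA'.prod measB').nullMeasurableSet,
    hmp.measure_preimage (MeasurableSet.univ.prod measB').nullMeasurableSet,
    Measure.prod_prod, Measure.prod_prod, measure_univ, one_mul]
  congr 1
  rw [hA', Measure.pi_pi]
  have hval : ∀ u : Subtype p,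
      ν (if u.1 ∈ T then Set.Iic (gt.f u.1 Sm) else Set.Ioi (gt.f u.1 Sm)) =
        (fun x : V => if x ∈ T then ENNReal.ofReal (gt.f x Sm)
          else ENNReal.ofReal (1 - gt.f x Sm)) u.1 := by
    intro u
    by_cases h : u.1 ∈ T
    · simp only [h, if_true]
      exact nu_Iic (gt.f_nonneg _ _) (gt.f_le_one _ _)
    · simp only [h, if_false]
      exact nu_Ioi (gt.f_nonneg _ _) (gt.f_le_one _ _)
  rw [Finset.prod_congr rfl (fun u _ => hval u)]
  rw [← Finset.prod_subtype (Finset.univ.filter fun u => layer u = m - 1)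
    (fun x => by simp [hp]) (fun x : V => if x ∈ T then ENNReal.ofReal (gt.f x Sm)
      else ENNReal.ofReal (1 - gt.f x Sm))]
  have hsub : T ⊆ Finset.univ.filter fun u => layer u = m - 1 := by
    intro u hu
    simp only [Finset.mem_filter, Finset.mem_univ, true_and]
    exact hT u hu
  conv_lhs => rw [← Finset.union_sdiff_of_subset hsub]
  rw [Finset.prod_union Finset.disjoint_sdiff]
  congr 1
  · exact Finset.prod_congr rfl fun x hx => by rw [if_pos hx]
  · exact Finset.prod_congr rfl fun x hx => by rw [if_neg (Finset.mem_sdiff.1 hx).2]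

end MeasureAB

end AuxGT


/-- In the general threshold model on a layered graph with layers `V_1, …, V_m`, for every
node `v ∉ V_m` and every seed set `S_m ⊆ V_m`,
`P_v(S_m) = ∑_{S_{m-1} ⊆ V_{m-1}} ∏_{u ∈ S_{m-1}} f_u(S_m) ∏_{u ∈ V_{m-1} \ S_{m-1}} (1 - f_u(S_m)) P_v(S_{m-1})`,
where `P_v(S_{m-1})` is the activation probability of `v` from seed set `S_{m-1} ⊆ V_{m-1}`
(the diffusion restricted to layers `V_1, …, V_{m-1}`, which coincides with the original
diffusion since nodes of `V_m` have no in-neighbors). -/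
theorem layered_activationProb_recursion
    {V : Type*} [Fintype V] [DecidableEq V] (gt : GTInstance V)
    (m : ℕ) (layer : V → ℕ) (hlay : IsLayered gt m layer)
    (v : V) (hv : layer v ≠ m)
    (Sm : Finset V) (hSm : ∀ u ∈ Sm, layer u = m) :
    activationProb gt v Sm =
      ∑ T ∈ ((Finset.univ : Finset V).filter fun u => layer u = m - 1).powerset,
        (∏ u ∈ T, gt.f u Sm) *
          (∏ u ∈ ((Finset.univ : Finset V).filter fun u => layer u = m - 1) \ T,
            (1 - gt.f u Sm)) * activationProb gt v T := by
  classical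
  haveI : IsProbabilityMeasure (cubeMeasure V) := AuxGT.cube_prob
  set Lm1 : Finset V := (Finset.univ : Finset V).filter fun u => layer u = m - 1 with hLm1
  have hT_of : ∀ T ∈ Lm1.powerset, ∀ u ∈ T, layer u = m - 1 := by
    intro T hT u hu
    have h2 := Finset.mem_powerset.1 hT hu
    rw [hLm1, Finset.mem_filter] at h2
    exact h2.2
  have hpart : cubeMeasure V {θ | v ∈ finalSet gt θ Sm} =
      cubeMeasure V (⋃ T ∈ Lm1.powerset,
        (AuxGT.Aset gt m layer Sm T ∩ AuxGT.Bset gt v T)) := by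
    apply measure_congr
    rw [Filter.eventuallyEq_set]
    filter_upwards [AuxGT.cube_pos_aee (V := V)] with θ hθ
    simp only [Set.mem_setOf_eq, Set.mem_iUnion, Set.mem_inter_iff]
    constructor
    · intro h
      refine ⟨AuxGT.Tset gt m layer θ Sm, ?_, ?_, ?_⟩
      · rw [Finset.mem_powerset]
        intro u hu
        rw [hLm1, Finset.mem_filter]
        exact ⟨Finset.mem_univ u, AuxGT.Tset_layer gt m layer θ Sm u hu⟩
      · intro u hu
        simp only [AuxGT.Tset, Finset.mem_filter, Finset.mem_univ, true_and]
        constructor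
        · intro h2; exact ⟨hu, h2⟩
        · intro h2; exact h2.2
      · exact (AuxGT.finalSet_decomp gt m layer hlay hθ hSm hv).1 h
    · rintro ⟨T, hTp, hA, hB⟩
      have hTeq : T = AuxGT.Tset gt m layer θ Sm := by
        ext u
        simp only [AuxGT.Tset, Finset.mem_filter, Finset.mem_univ, true_and]
        constructor
        · intro hu
          have hu1 : layer u = m - 1 := hT_of T hTp u hu
          exact ⟨hu1, (hA u hu1).2 hu⟩
        · rintro ⟨hu1, hu2⟩
          exact (hA u hu1).1 hu2
      rw [hTeq] at hB
      exact (AuxGT.finalSet_decomp gt m layer hlay hθ hSm hv).2 hB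
  have hdisj : (↑Lm1.powerset : Set (Finset V)).PairwiseDisjoint
      (fun T => AuxGT.Aset gt m layer Sm T ∩ AuxGT.Bset gt v T) := by
    intro T hT T' hT' hne
    rw [Function.onFun, Set.disjoint_left]
    intro θ hθT hθT'
    apply hne
    ext u
    by_cases hu : layer u = m - 1
    · rw [← (hθT.1 u hu), ← (hθT'.1 u hu)]
    · constructor
      · intro h; exact absurd (hT_of T (Finset.mem_coe.1 hT) u h) hu
      · intro h; exact absurd (hT_of T' (Finset.mem_coe.1 hT') u h) hu
  have hmeas : ∀ T ∈ Lm1.powerset,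
      MeasurableSet (AuxGT.Aset gt m layer Sm T ∩ AuxGT.Bset gt v T) :=
    fun T _ => (AuxGT.meas_Aset gt m layer Sm T).inter (AuxGT.meas_Bset gt v T)
  have hsum := measure_biUnion_finset (μ := cubeMeasure V) hdisj hmeas
  have hact : activationProb gt v Sm =
      (cubeMeasure V {θ | v ∈ finalSet gt θ Sm}).toReal := rfl
  rw [hact, hpart, hsum]
  have hterm : ∀ T ∈ Lm1.powerset,
      cubeMeasure V (AuxGT.Aset gt m layer Sm T ∩ AuxGT.Bset gt v T) =
        ((∏ u ∈ T, ENNReal.ofReal (gt.f u Sm)) *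
          ∏ u ∈ Lm1 \ T, ENNReal.ofReal (1 - gt.f u Sm)) *
          cubeMeasure V (AuxGT.Bset gt v T) :=
    fun T hT => AuxGT.measure_AB gt m layer hlay v Sm T (hT_of T hT)
  rw [Finset.sum_congr rfl hterm]
  have hfin : ∀ T ∈ Lm1.powerset,
      ((∏ u ∈ T, ENNReal.ofReal (gt.f u Sm)) *
        ∏ u ∈ Lm1 \ T, ENNReal.ofReal (1 - gt.f u Sm)) *
        cubeMeasure V (AuxGT.Bset gt v T) ≠ ⊤ := by
    intro T _
    refine ENNReal.mul_ne_top (ENNReal.mul_ne_top ?_ ?_) (measure_ne_top _ _)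
    · exact (ENNReal.prod_lt_top fun u _ => ENNReal.ofReal_lt_top).ne
    · exact (ENNReal.prod_lt_top fun u _ => ENNReal.ofReal_lt_top).ne
  rw [ENNReal.toReal_sum hfin]
  refine Finset.sum_congr rfl fun T hT => ?_
  rw [ENNReal.toReal_mul, ENNReal.toReal_mul, ENNReal.toReal_prod, ENNReal.toReal_prod]
  have h1 : ∀ u ∈ T, (ENNReal.ofReal (gt.f u Sm)).toReal = gt.f u Sm :=
    fun u _ => ENNReal.toReal_ofReal (gt.f_nonneg u Sm)
  have h2 : ∀ u ∈ Lm1 \ T, (ENNReal.ofReal (1 - gt.f u Sm)).toReal = 1 - gt.f u Sm :=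
    fun u _ => ENNReal.toReal_ofReal (by linarith [gt.f_le_one u Sm])
  rw [Finset.prod_congr rfl h1, Finset.prod_congr rfl h2]
  rfl

end
end

section
/- Let U and V be finite sets, let f : 2^V → [0,1] be a set function, and for each v ∈ V let g_v : 2^U → [0,1] be a set function. Define the compound set function h : 2^U → ℝ by h(S) = ∑_{T ⊆ V} ∏_{v ∈ T} g_v(S) · ∏_{v ∈ V \ T} (1 − g_v(S)) · f(T). If f is AD-k and g_v is AD-k for every v ∈ V, then h is AD-k. -/
open MeasureTheory Finset
open scoped Classical

noncomputable section


/-!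
Write `h(S) = F(g(S))`, where `F` is the multilinear extension of `f` to `[0,1]^V`. Since `F` is
affine in each coordinate with slope the multilinear extension of the discrete derivative of `f`,
changing the weights one coordinate at a time telescopes `h(S ∪ {a}) - h(S)` into a sum of
products `(g_v(S ∪ {a}) - g_v(S)) · ∂_v F(…)`. The Leibniz rule splits the differences of such a
product over `A \ {a}` into a difference of `g_v` over a set containing `a` times a lower-order
mixed difference of `∂_v F`. So, by induction on `A`, the difference of order `A` of `∂_W F ∘ g`
has sign `(-1)^(|A| + |W| + 1)` whenever `1 ≤ |A| + |W| ≤ k`. For `A = ∅` this is the AD-`k`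
property of `f`, which survives averaging with weights in `[0, 1]`.
-/

section MultilinearExtension

variable {ι : Type*} [DecidableEq ι]

def multilinExt (s : Finset ι) (F : Finset ι → ℝ) (x : ι → ℝ) : ℝ :=
  ∑ T ∈ s.powerset, (∏ i ∈ T, x i) * (∏ i ∈ s \ T, (1 - x i)) * F T

theorem multilinExt_congr {s : Finset ι} (F : Finset ι → ℝ) {x y : ι → ℝ}
    (h : ∀ i ∈ s, x i = y i) : multilinExt s F x = multilinExt s F y := by
  refine sum_congr rfl fun T hT => ?_
  have hT := mem_powerset.mp hT
  have hprod : ∏ i ∈ T, x i = ∏ i ∈ T, y i := prod_congr rfl fun i hi => h i (hT hi)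
  have hcoprod : ∏ i ∈ s \ T, (1 - x i) = ∏ i ∈ s \ T, (1 - y i) :=
    prod_congr rfl fun i hi => by rw [h i (mem_sdiff.mp hi).1]
  rw [hprod, hcoprod]

theorem multilinExt_sub (s : Finset ι) (F G : Finset ι → ℝ) (x : ι → ℝ) :
    multilinExt s (fun T => F T - G T) x = multilinExt s F x - multilinExt s G x := by
  simp only [multilinExt, ← sum_sub_distrib, mul_sub]

theorem multilinExt_insert {s : Finset ι} {i : ι} (hi : i ∉ s) (F : Finset ι → ℝ) (x : ι → ℝ) :
    multilinExt (insert i s) F x =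
      x i * multilinExt s (fun T => F (insert i T)) x + (1 - x i) * multilinExt s F x := by
  rw [multilinExt, sum_powerset_insert hi, multilinExt, multilinExt, mul_sum, mul_sum, add_comm]
  congr 1 <;> refine sum_congr rfl fun T hT => ?_
  · have hiT : i ∉ T := fun h => hi (mem_powerset.mp hT h)
    rw [prod_insert hiT, insert_sdiff_insert, sdiff_insert_of_notMem hi]
    ring
  · have hiT : i ∉ T := fun h => hi (mem_powerset.mp hT h)
    rw [insert_sdiff_of_notMem _ hiT, prod_insert fun h => hi (mem_sdiff.mp h).1]
    ring

theorem multilinExt_insert_sub {s : Finset ι} {i : ι} (hi : i ∉ s) (F : Finset ι → ℝ)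
    {x y : ι → ℝ} (h : ∀ j ∈ s, x j = y j) :
    multilinExt (insert i s) F y - multilinExt (insert i s) F x =
      (y i - x i) * multilinExt s (fun T => F (insert i T) - F T) x := by
  rw [multilinExt_insert hi, multilinExt_insert hi, ← multilinExt_congr F h,
    ← multilinExt_congr _ h, multilinExt_sub]
  ring

theorem multilinExt_nonneg_of_mul {s : Finset ι} {F : Finset ι → ℝ} {x : ι → ℝ} (c : ℝ)
    (hx0 : ∀ i, 0 ≤ x i) (hx1 : ∀ i, x i ≤ 1) (hF : ∀ T, 0 ≤ c * F T) :
    0 ≤ c * multilinExt s F x := by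
  rw [multilinExt, mul_sum]
  refine sum_nonneg fun T _ => ?_
  rw [mul_left_comm]
  exact mul_nonneg (mul_nonneg (prod_nonneg fun i _ => hx0 i)
    (prod_nonneg fun i _ => sub_nonneg.2 (hx1 i))) (hF T)

end MultilinearExtension

section Differences

variable {α : Type*} [DecidableEq α]

theorem adDiff_empty (f : Finset α → ℝ) (S : Finset α) : adDiff f ∅ S = f S := by
  simp [adDiff]

theorem adDiff_add (f g : Finset α → ℝ) (A S : Finset α) :
    adDiff (fun S => f S + g S) A S = adDiff f A S + adDiff g A S := by
  simp only [adDiff, ← sum_add_distrib, mul_add]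

theorem adDiff_sub (f g : Finset α → ℝ) (A S : Finset α) :
    adDiff (fun S => f S - g S) A S = adDiff f A S - adDiff g A S := by
  simp only [adDiff, ← sum_sub_distrib, mul_sub]

theorem adDiff_zero (A S : Finset α) : adDiff (fun _ => 0) A S = 0 := by
  simp [adDiff]

theorem adDiff_insert {a : α} {A : Finset α} (ha : a ∉ A) (f : Finset α → ℝ) (S : Finset α) :
    adDiff f (insert a A) S = adDiff (fun S => f (insert a S) - f S) A S := by
  rw [adDiff, adDiff, sum_powerset_insert ha, ← sum_add_distrib]
  refine sum_congr rfl fun B hB => ?_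
  have haB : a ∉ B := fun h => ha (mem_powerset.mp hB h)
  rw [insert_sdiff_of_notMem _ haB, insert_sdiff_insert, sdiff_insert_of_notMem ha,
    card_insert_of_notMem haB, union_insert]
  ring

theorem adDiff_comp_insert (f : Finset α → ℝ) (a : α) (A S : Finset α) :
    adDiff (fun S => f (insert a S)) A S = adDiff f A (insert a S) := by
  simp only [adDiff, insert_union]

theorem adDiff_insert_eq_sub {a : α} {A : Finset α} (ha : a ∉ A) (f : Finset α → ℝ)
    (S : Finset α) : adDiff f (insert a A) S = adDiff f A (insert a S) - adDiff f A S := by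
  rw [adDiff_insert ha, adDiff_sub, adDiff_comp_insert]

theorem adDiff_of_mem {a : α} {A : Finset α} (ha : a ∈ A) (f : Finset α → ℝ) (S : Finset α) :
    adDiff f A S = adDiff (fun S => f (insert a S) - f S) (A.erase a) S := by
  conv_lhs => rw [← insert_erase ha]
  exact adDiff_insert (notMem_erase a A) f S

theorem adDiff_comp_insert_of_mem (f : Finset α → ℝ) {a : α} {A : Finset α} (ha : a ∈ A)
    (S : Finset α) : adDiff (fun S => f (insert a S)) A S = 0 := by
  rw [adDiff_of_mem ha]
  simp only [insert_idem, sub_self, adDiff_zero]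

theorem IsADk.comp_insert {f : Finset α → ℝ} {k : ℕ} (hf : IsADk f k) (a : α) :
    IsADk (fun S => f (insert a S)) k := by
  intro A S hA hAk
  by_cases ha : a ∈ A
  · simp [adDiff_comp_insert_of_mem f ha]
  · rw [adDiff_comp_insert]
    exact hf A (insert a S) hA hAk

theorem adDiff_mul (P Q : Finset α → ℝ) (C S : Finset α) :
    adDiff (fun S => P S * Q S) C S =
      ∑ B ∈ C.powerset, adDiff P B S * adDiff Q (C \ B) (S ∪ B) := by
  induction C using Finset.induction_on generalizing P Q S with
  | empty => simp [adDiff_empty]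
  | insert c C hc ih =>
    have hsplit : ∀ S, P (insert c S) * Q (insert c S) - P S * Q S =
        (P (insert c S) - P S) * Q (insert c S) + P S * (Q (insert c S) - Q S) := fun S => by
      ring
    rw [adDiff_insert hc, funext hsplit, adDiff_add, ih, ih, sum_powerset_insert hc, add_comm]
    congr 1 <;> refine sum_congr rfl fun B hB => ?_
    · have hcB : c ∉ B := fun h => hc (mem_powerset.mp hB h)
      rw [insert_sdiff_of_notMem _ hcB, adDiff_insert (fun h => hc (mem_sdiff.mp h).1)]
    · have hcB : c ∉ B := fun h => hc (mem_powerset.mp hB h)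
      rw [adDiff_insert hcB, insert_sdiff_insert, sdiff_insert_of_notMem hc, union_insert,
        ← adDiff_comp_insert]

end Differences

theorem neg_one_pow_mul_mul_nonneg {x y : ℝ} {m n N : ℕ} (h : m + n = N + 2)
    (hx : 0 ≤ (-1) ^ m * x) (hy : 0 ≤ (-1) ^ n * y) : 0 ≤ (-1) ^ N * (x * y) := by
  have hsign : (-1 : ℝ) ^ m * (-1) ^ n = (-1) ^ N := by
    rw [← pow_add, h, pow_add]
    norm_num
  calc 0 ≤ ((-1) ^ m * x) * ((-1) ^ n * y) := mul_nonneg hx hy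
    _ = (-1) ^ N * (x * y) := by rw [← hsign]; ring

section Compound

variable {U V : Type*} [DecidableEq V]

/-- `compound f g univ` is the compound set function of the theorem; `compound (adDiff f W) γ s`
with `s` disjoint from `W` is its `W`-th partial derivative in the weights. -/
def compound (F : Finset V → ℝ) (γ : V → Finset U → ℝ) (s : Finset V) (S : Finset U) : ℝ :=
  multilinExt s F (γ · S)

theorem compound_piecewise_insert_sub (F : Finset V → ℝ) (γ' γ : V → Finset U → ℝ)
    {s R : Finset V} {v : V} (hv : v ∈ s) (hvR : v ∉ R) (S : Finset U) :
    compound F ((insert v R).piecewise γ' γ) s S - compound F (R.piecewise γ' γ) s S =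
      (γ' v S - γ v S) *
        compound (fun T => F (insert v T) - F T) (R.piecewise γ' γ) (s.erase v) S := by
  rw [compound, compound, compound, ← insert_erase hv,
    multilinExt_insert_sub (notMem_erase v s), erase_insert (notMem_erase v s)]
  · simp only [piecewise_insert_self, piecewise_eq_of_notMem _ _ _ hvR]
  · intro u hu
    rw [piecewise_insert_of_ne _ _ _ (ne_of_mem_erase hu)]

variable [DecidableEq U]

structure IsADkFamily (γ : V → Finset U → ℝ) (k : ℕ) : Prop where
  nonneg : ∀ v S, 0 ≤ γ v S
  le_one : ∀ v S, γ v S ≤ 1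
  isADk : ∀ v, IsADk (γ v) k

theorem IsADkFamily.piecewise_comp_insert {γ : V → Finset U → ℝ} {k : ℕ} (hγ : IsADkFamily γ k)
    (a : U) (R : Finset V) :
    IsADkFamily (R.piecewise (fun v S => γ v (insert a S)) γ) k where
  nonneg v S := by by_cases hv : v ∈ R <;> simp [hv, hγ.nonneg]
  le_one v S := by by_cases hv : v ∈ R <;> simp [hv, hγ.le_one]
  isADk v := by
    by_cases hv : v ∈ R
    · simpa [hv] using (hγ.isADk v).comp_insert a
    · simpa [hv] using hγ.isADk v

/-- The sign pattern of the mixed differences: order `A` in `U`, order `W` in the weights. -/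
def MixedDiffSign (f : Finset V → ℝ) (k : ℕ) (A : Finset U) : Prop :=
  ∀ γ : V → Finset U → ℝ, IsADkFamily γ k →
    ∀ s W : Finset V, Disjoint s W → 1 ≤ #A + #W → #A + #W ≤ k → ∀ S,
      0 ≤ (-1 : ℝ) ^ (#A + #W + 1) * adDiff (compound (adDiff f W) γ s) A S

theorem mixedDiffSign_empty {f : Finset V → ℝ} {k : ℕ} (hf : IsADk f k) :
    MixedDiffSign f k (∅ : Finset U) := by
  intro γ hγ s W _ hW hk S
  rw [card_empty, zero_add] at hW hk ⊢
  rw [adDiff_empty]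
  exact multilinExt_nonneg_of_mul _ (hγ.nonneg · S) (hγ.le_one · S)
    (hf W · (card_pos.mp hW) hk)

section InductionStep

variable {f : Finset V → ℝ} {k : ℕ} {A : Finset U} (ih : ∀ B ⊂ A, MixedDiffSign f k B)
  {a : U} (ha : a ∈ A)
include ih ha

theorem sign_adDiff_sub_mul_compound {γ : V → Finset U → ℝ} (hγ : IsADkFamily γ k)
    {s W : Finset V} (hsW : Disjoint s W) {v : V} (hv : v ∈ s) (hk : #A + #W ≤ k)
    (S : Finset U) :
    0 ≤ (-1) ^ (#A + #W + 1) * adDiff (fun S => (γ v (insert a S) - γ v S) *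
      compound (adDiff f (insert v W)) γ (s.erase v) S) (A.erase a) S := by
  rw [adDiff_mul, mul_sum]
  refine sum_nonneg fun B hB => ?_
  have hBA : B ⊆ A.erase a := mem_powerset.mp hB
  have haB : a ∉ B := fun h => notMem_erase a A (hBA h)
  have hvW : v ∉ W := disjoint_left.mp hsW hv
  have hcardA := card_erase_add_one ha
  have hcardB := card_sdiff_add_card_eq_card hBA
  have hslope : 0 ≤ (-1) ^ (#B + 1 + 1) * adDiff (fun S => γ v (insert a S) - γ v S) B S := by
    have := hγ.isADk v (insert a B) S (insert_nonempty a B)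
      (by rw [card_insert_of_notMem haB]; omega)
    rwa [card_insert_of_notMem haB, adDiff_insert haB] at this
  have hrest := ih (A.erase a \ B) ((sdiff_subset).trans_ssubset (erase_ssubset ha)) γ hγ
    (s.erase v) (insert v W)
    (disjoint_insert_right.mpr ⟨notMem_erase v s, hsW.mono_left (erase_subset v s)⟩)
    (by rw [card_insert_of_notMem hvW]; omega) (by rw [card_insert_of_notMem hvW]; omega) (S ∪ B)
  rw [card_insert_of_notMem hvW] at hrest
  exact neg_one_pow_mul_mul_nonneg (by omega) hslope hrest

theorem sign_adDiff_compound_piecewise_sub {γ : V → Finset U → ℝ} (hγ : IsADkFamily γ k)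
    {s W : Finset V} (hsW : Disjoint s W) (hk : #A + #W ≤ k) (S : Finset U) {R : Finset V}
    (hRs : R ⊆ s) :
    0 ≤ (-1) ^ (#A + #W + 1) *
      (adDiff (compound (adDiff f W) (R.piecewise (fun v S => γ v (insert a S)) γ) s)
        (A.erase a) S - adDiff (compound (adDiff f W) γ s) (A.erase a) S) := by
  induction R using Finset.induction_on with
  | empty => simp
  | insert v R hvR ihR =>
    have hv : v ∈ s := hRs (mem_insert_self v R)
    have hderiv : (fun T => adDiff f W (insert v T) - adDiff f W T) = adDiff f (insert v W) :=
      funext fun T => (adDiff_insert_eq_sub (disjoint_left.mp hsW hv) f T).symm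
    rw [← sub_add_sub_cancel _ (adDiff (compound (adDiff f W)
      (R.piecewise (fun v S => γ v (insert a S)) γ) s) (A.erase a) S), mul_add]
    refine add_nonneg ?_ (ihR ((subset_insert v R).trans hRs))
    rw [← adDiff_sub, funext (compound_piecewise_insert_sub _ _ _ hv hvR), hderiv]
    have := sign_adDiff_sub_mul_compound ih ha (hγ.piecewise_comp_insert a R) hsW hv hk S
    rwa [piecewise_eq_of_notMem _ _ _ hvR] at this

theorem mixedDiffSign_of_ssubset : MixedDiffSign f k A := by
  intro γ hγ s W hsW _ hk S
  have hshift : ∀ S, compound (adDiff f W) γ s (insert a S) =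
      compound (adDiff f W) (s.piecewise (fun v S => γ v (insert a S)) γ) s S :=
    fun S => multilinExt_congr _ fun v hv => by rw [piecewise_eq_of_mem _ _ _ hv]
  rw [adDiff_of_mem ha, adDiff_sub]
  simp only [hshift]
  exact sign_adDiff_compound_piecewise_sub ih ha hγ hsW hk S subset_rfl

end InductionStep

theorem mixedDiffSign {f : Finset V → ℝ} {k : ℕ} (hf : IsADk f k) (A : Finset U) :
    MixedDiffSign f k A := by
  induction A using Finset.strongInduction with
  | H A ih =>
    obtain rfl | ⟨a, ha⟩ := A.eq_empty_or_nonempty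
    · exact mixedDiffSign_empty hf
    · exact mixedDiffSign_of_ssubset ih ha

end Compound

theorem compound_set_function_ADk_general
    {U V : Type*} [DecidableEq U] [Fintype V] [DecidableEq V]
    (f : Finset V → ℝ)
    (g : V → Finset U → ℝ) (hg0 : ∀ v S, 0 ≤ g v S) (hg1 : ∀ v S, g v S ≤ 1)
    (k : ℕ) (hf : IsADk f k) (hg : ∀ v, IsADk (g v) k) :
    IsADk (fun S : Finset U =>
      ∑ T ∈ (Finset.univ : Finset V).powerset,
        (∏ v ∈ T, g v S) * (∏ v ∈ Finset.univ \ T, (1 - g v S)) * f T) k := by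
  intro A S hA hAk
  have hsign := mixedDiffSign hf A g ⟨hg0, hg1, hg⟩ univ ∅ (disjoint_empty_right _)
    (by simpa using hA.card_pos) (by simpa using hAk) S
  rw [funext (adDiff_empty f), card_empty, add_zero] at hsign
  exact hsign

/-- If `f : 2^V → [0,1]` is AD-`k` and each `g_v : 2^U → [0,1]` is AD-`k`, then the
compound set function
`h(S) = ∑_{T ⊆ V} ∏_{v ∈ T} g_v(S) ∏_{v ∈ V \ T} (1 - g_v(S)) f(T)` is AD-`k`. -/
theorem compound_set_function_ADk
    {U V : Type*} [Fintype U] [DecidableEq U] [Fintype V] [DecidableEq V]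
    (f : Finset V → ℝ) (hf0 : ∀ T, 0 ≤ f T) (hf1 : ∀ T, f T ≤ 1)
    (g : V → Finset U → ℝ) (hg0 : ∀ v S, 0 ≤ g v S) (hg1 : ∀ v S, g v S ≤ 1)
    (k : ℕ) (hf : IsADk f k) (hg : ∀ v, IsADk (g v) k) :
    IsADk (fun S : Finset U =>
      ∑ T ∈ (Finset.univ : Finset V).powerset,
        (∏ v ∈ T, g v S) * (∏ v ∈ Finset.univ \ T, (1 - g v S)) * f T) k :=
  compound_set_function_ADk_general f g hg0 hg1 k hf hg

end
end

section
/- Let U and V be finite sets with |U| = n, let f : 2^V → [0,1] be a set function, and for each v ∈ V let G_v : ℝ^n → ℝ be infinitely differentiable. Define H(x) = ∑_{T ⊆ V} ∏_{v ∈ T} G_v(x) · ∏_{v ∈ V \ T} (1 − G_v(x)) · f(T). Then for any coordinate index i, ∂H(x)/∂x_i = ∑_{v ∈ V} ∑_{T ⊆ V \ {v}} (∂G_v(x)/∂x_i) · ∏_{u ∈ T} G_u(x) · ∏_{w ∈ V \ (T ∪ {v})} (1 − G_w(x)) · Δ_v f(T), where Δ_v f(T) = f(T ∪ {v}) − f(T).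 -/
open MeasureTheory Finset
open scoped Classical

noncomputable section


/-- The partial derivative of `F : ℝ^ι → ℝ` in the `i`-th coordinate direction. -/
def pderivI {ι : Type*} [Fintype ι] [DecidableEq ι] (i : ι) (F : (ι → ℝ) → ℝ) :
    (ι → ℝ) → ℝ :=
  fun x => fderiv ℝ F x (Pi.single i 1)

/-- Iterated mixed partial derivative of `F` along a list of coordinate indices. -/
def mixedPartial {ι : Type*} [Fintype ι] [DecidableEq ι] (F : (ι → ℝ) → ℝ) :
    List ι → (ι → ℝ) → ℝ
  | [] => F
  | i :: l => pderivI i (mixedPartial F l)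

/-- A function `F : ℝ^ι → ℝ` is AD-`k` as a continuous function if for every `1 ≤ ℓ ≤ k`,
every `ℓ` pairwise distinct coordinates `i_1, …, i_ℓ`, and every `x ∈ [0,1]^ι`,
`(-1)^{ℓ+1} ∂^ℓ F(x)/∂x_{i_1}⋯∂x_{i_ℓ} ≥ 0`. -/
def IsADkC {ι : Type*} [Fintype ι] [DecidableEq ι] (F : (ι → ℝ) → ℝ) (k : ℕ) : Prop :=
  ∀ l : List ι, l ≠ [] → l.length ≤ k → l.Nodup →
    ∀ x : ι → ℝ, (∀ i, x i ∈ Set.Icc (0 : ℝ) 1) →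
      0 ≤ (-1 : ℝ) ^ (l.length + 1) * mixedPartial F l x


/-- First-order partial derivative formula for the compound function
`H(x) = ∑_{T ⊆ V} ∏_{v ∈ T} G_v(x) ∏_{v ∈ V \ T} (1 - G_v(x)) f(T)`:
`∂H/∂x_i = ∑_{v ∈ V} ∑_{T ⊆ V \ {v}} (∂G_v/∂x_i) ∏_{u ∈ T} G_u ∏_{w ∉ T ∪ {v}} (1 - G_w) Δ_v f(T)`. -/
theorem compound_first_partial_formula
    {U V : Type*} [Fintype U] [DecidableEq U] [Fintype V] [DecidableEq V]
    (f : Finset V → ℝ)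
    (G : V → (U → ℝ) → ℝ) (hG : ∀ v, ContDiff ℝ (⊤ : ℕ∞) (G v)) (i : U) (x : U → ℝ) :
    pderivI i (fun y : U → ℝ =>
        ∑ T ∈ (Finset.univ : Finset V).powerset,
          (∏ v ∈ T, G v y) * (∏ v ∈ Finset.univ \ T, (1 - G v y)) * f T) x =
      ∑ v : V, ∑ T ∈ (Finset.univ.erase v).powerset,
        pderivI i (G v) x * (∏ u ∈ T, G u x) *
          (∏ w ∈ Finset.univ \ insert v T, (1 - G w x)) *
            (f (insert v T) - f T) := by
  have hGd : ∀ v, DifferentiableAt ℝ (G v) x := fun v =>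
    ((hG v).differentiable (by simp)).differentiableAt
  set g : Finset V → V → (U → ℝ) → ℝ :=
    fun T v y => if v ∈ T then G v y else 1 - G v y with hg
  set D : Finset V → V → ((U → ℝ) →L[ℝ] ℝ) :=
    fun T v => if v ∈ T then fderiv ℝ (G v) x else -fderiv ℝ (G v) x with hD
  -- rewriting of each summand as a full product over univ
  have hprod : ∀ (T : Finset V) (y : U → ℝ),
      (∏ v ∈ T, G v y) * (∏ v ∈ Finset.univ \ T, (1 - G v y)) =
        ∏ v ∈ (Finset.univ : Finset V), g T v y := by
    intro T y
    rw [hg]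
    rw [Finset.prod_ite (fun v => G v y) (fun v => 1 - G v y)]
    congr 1
    · apply Finset.prod_congr _ (fun _ _ => rfl)
      ext u; simp
    · apply Finset.prod_congr _ (fun _ _ => rfl)
      ext u; simp
  have hDer : ∀ (T : Finset V) (v : V), HasFDerivAt (g T v) (D T v) x := by
    intro T v
    by_cases hv : v ∈ T
    · simpa [hg, hD, hv] using (hGd v).hasFDerivAt
    · simpa [hg, hD, hv] using ((hGd v).hasFDerivAt).const_sub (1 : ℝ)
  have hH : HasFDerivAt
      (fun y : U → ℝ => ∑ T ∈ (Finset.univ : Finset V).powerset,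
        (∏ v ∈ T, G v y) * (∏ v ∈ Finset.univ \ T, (1 - G v y)) * f T)
      (∑ T ∈ (Finset.univ : Finset V).powerset,
        f T • (∑ v ∈ (Finset.univ : Finset V),
          (∏ u ∈ Finset.univ.erase v, g T u x) • D T v)) x := by
    have : (fun y : U → ℝ => ∑ T ∈ (Finset.univ : Finset V).powerset,
        (∏ v ∈ T, G v y) * (∏ v ∈ Finset.univ \ T, (1 - G v y)) * f T) =
        (fun y : U → ℝ => ∑ T ∈ (Finset.univ : Finset V).powerset,
          (∏ v ∈ (Finset.univ : Finset V), g T v y) * f T) := by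
      funext y
      exact Finset.sum_congr rfl fun T _ => by rw [hprod]
    rw [this]
    exact HasFDerivAt.fun_sum fun T _ =>
      (HasFDerivAt.finset_prod fun v _ => hDer T v).mul_const (f T)
  have hL : pderivI i (fun y : U → ℝ =>
      ∑ T ∈ (Finset.univ : Finset V).powerset,
        (∏ v ∈ T, G v y) * (∏ v ∈ Finset.univ \ T, (1 - G v y)) * f T) x =
      ∑ T ∈ (Finset.univ : Finset V).powerset,
        f T * ∑ v ∈ (Finset.univ : Finset V),
          (∏ u ∈ Finset.univ.erase v, g T u x) * D T v (Pi.single i 1) := by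
    rw [pderivI, hH.fderiv]
    simp [ContinuousLinearMap.sum_apply, Finset.mul_sum, smul_eq_mul]
  rw [hL]
  -- now pure algebra
  simp_rw [Finset.mul_sum]
  rw [Finset.sum_comm]
  apply Finset.sum_congr rfl
  intro v _
  have huniv : (Finset.univ : Finset V) = insert v (Finset.univ.erase v) :=
    (Finset.insert_erase (Finset.mem_univ v)).symm
  rw [show ((Finset.univ : Finset V).powerset)
      = (insert v (Finset.univ.erase v)).powerset by rw [← huniv],
    Finset.sum_powerset_insert (Finset.notMem_erase v _)]
  rw [← Finset.sum_add_distrib]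
  apply Finset.sum_congr rfl
  intro T hT
  rw [Finset.mem_powerset] at hT
  have hvT : v ∉ T := fun h => Finset.notMem_erase v _ (hT h)
  -- the common product
  have hP : ∀ T' : Finset V, (∀ u, u ≠ v → (u ∈ T' ↔ u ∈ T)) →
      (∏ u ∈ Finset.univ.erase v, g T' u x) =
        (∏ u ∈ T, G u x) * ∏ w ∈ Finset.univ \ insert v T, (1 - G w x) := by
    intro T' hT'
    rw [hg]
    have : (∏ u ∈ Finset.univ.erase v, if u ∈ T' then G u x else 1 - G u x)
        = ∏ u ∈ Finset.univ.erase v, if u ∈ T then G u x else 1 - G u x := by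
      apply Finset.prod_congr rfl
      intro u hu
      rw [Finset.mem_erase] at hu
      simp [hT' u hu.1]
    rw [this, Finset.prod_ite (fun u => G u x) (fun u => 1 - G u x)]
    congr 1
    · apply Finset.prod_congr _ (fun _ _ => rfl)
      ext u
      simp only [Finset.mem_filter, Finset.mem_erase, Finset.mem_univ, true_and, and_true]
      constructor
      · tauto
      · intro h; exact ⟨fun he => hvT (he ▸ h), h⟩
    · apply Finset.prod_congr _ (fun _ _ => rfl)
      ext u
      simp only [Finset.mem_filter, Finset.mem_erase, Finset.mem_univ, true_and,
        Finset.mem_sdiff, Finset.mem_insert]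
      tauto
  have h1 : (∏ u ∈ Finset.univ.erase v, g T u x) =
      (∏ u ∈ T, G u x) * ∏ w ∈ Finset.univ \ insert v T, (1 - G w x) :=
    hP T (fun u _ => Iff.rfl)
  have h2 : (∏ u ∈ Finset.univ.erase v, g (insert v T) u x) =
      (∏ u ∈ T, G u x) * ∏ w ∈ Finset.univ \ insert v T, (1 - G w x) :=
    hP (insert v T) (fun u hu => by simp [Finset.mem_insert, hu])
  have hd1 : D T v (Pi.single i 1) = -(pderivI i (G v) x) := by
    simp [hD, hvT, pderivI]
  have hd2 : D (insert v T) v (Pi.single i 1) = pderivI i (G v) x := by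
    simp [hD, pderivI]
  rw [h1, h2, hd1, hd2]
  ring

end
end

section
/- Let F : ℝ^n → ℝ be infinitely differentiable, let ℓ ≤ n, and fix values c_{ℓ+1}, …, c_n for the last n − ℓ coordinates. Then the iterated integral over [0,1]^ℓ of the mixed partial derivative ∂^ℓ F/∂x_1⋯∂x_ℓ (with the last coordinates fixed at c) equals the alternating sum ∑_{B ⊆ {1,…,ℓ}} (-1)^{|B|} F(y_B), where y_B is the point whose i-th coordinate is 0 for i ∈ B, 1 for i ∈ {1,…,ℓ} \ B, and c_i for i > ℓ. -/
open MeasureTheory Finset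
open scoped Classical

noncomputable section


lemma contDiff_pderivI {ι : Type*} [Fintype ι] [DecidableEq ι] (i : ι)
    {G : (ι → ℝ) → ℝ} (hG : ContDiff ℝ (⊤ : ℕ∞) G) : ContDiff ℝ (⊤ : ℕ∞) (pderivI i G) :=
  (hG.fderiv_right (by simp)).clm_apply contDiff_const

lemma contDiff_mixedPartial {ι : Type*} [Fintype ι] [DecidableEq ι]
    {F : (ι → ℝ) → ℝ} (hF : ContDiff ℝ (⊤ : ℕ∞) F) (L : List ι) :
    ContDiff ℝ (⊤ : ℕ∞) (mixedPartial F L) := by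
  induction L with
  | nil => exact hF
  | cons i L ih => exact contDiff_pderivI i ih

lemma integral_pderivI {n : ℕ} {G : (Fin n → ℝ) → ℝ} (hG : ContDiff ℝ (⊤ : ℕ∞) G) (i : Fin n)
    (c : Fin n → ℝ) :
    ∫ t in (0:ℝ)..1, pderivI i G (Function.update c i t)
      = G (Function.update c i 1) - G (Function.update c i 0) := by
  have hd : ∀ t ∈ Set.uIcc (0:ℝ) 1, HasDerivAt (fun t => G (Function.update c i t))
      (pderivI i G (Function.update c i t)) t := by
    intro t _
    have h1 : HasDerivAt (Function.update c i) (Pi.single i 1) t := hasDerivAt_update c i t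
    have h2 : HasFDerivAt G (fderiv ℝ G (Function.update c i t)) (Function.update c i t) :=
      (hG.differentiable (by simp) _).hasFDerivAt
    exact h2.comp_hasDerivAt t h1
  have hint : IntervalIntegrable (fun t => pderivI i G (Function.update c i t)) volume 0 1 :=
    (((contDiff_pderivI i hG).continuous).comp
      (continuous_const.update i continuous_id)).intervalIntegrable _ _
  exact intervalIntegral.integral_eq_sub_of_hasDerivAt hd hint

variable {n : ℕ}

def itInt : List (Fin n) → ((Fin n → ℝ) → ℝ) → (Fin n → ℝ) → ℝ
  | [], G, c => G c
  | i :: L, G, c => ∫ t in (0:ℝ)..1, itInt L G (Function.update c i t)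

lemma continuous_itInt (L : List (Fin n)) {G : (Fin n → ℝ) → ℝ} (hG : Continuous G) :
    Continuous (itInt L G) := by
  induction L with
  | nil => exact hG
  | cons i L ih =>
      have h : Continuous fun p : (Fin n → ℝ) × ℝ => itInt L G (Function.update p.1 i p.2) :=
        ih.comp (continuous_fst.update i continuous_snd)
      exact intervalIntegral.continuous_parametric_intervalIntegral_of_continuous'
        (f := fun c t => itInt L G (Function.update c i t)) h 0 1

lemma itInt_sub (L : List (Fin n)) {G₁ G₂ : (Fin n → ℝ) → ℝ}
    (h₁ : Continuous G₁) (h₂ : Continuous G₂) (c : Fin n → ℝ) :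
    itInt L (fun x => G₁ x - G₂ x) c = itInt L G₁ c - itInt L G₂ c := by
  induction L generalizing c with
  | nil => rfl
  | cons i L ih =>
      show (∫ t in (0:ℝ)..1, itInt L (fun x => G₁ x - G₂ x) (Function.update c i t)) = _
      have e1 : (∫ t in (0:ℝ)..1, itInt L (fun x => G₁ x - G₂ x) (Function.update c i t))
          = ∫ t in (0:ℝ)..1,
              (itInt L G₁ (Function.update c i t) - itInt L G₂ (Function.update c i t)) := by
        simp only [ih]
      have c1 : Continuous fun t : ℝ => itInt L G₁ (Function.update c i t) :=
        (continuous_itInt L h₁).comp (continuous_const.update i continuous_id)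
      have c2 : Continuous fun t : ℝ => itInt L G₂ (Function.update c i t) :=
        (continuous_itInt L h₂).comp (continuous_const.update i continuous_id)
      rw [e1, intervalIntegral.integral_sub (c1.intervalIntegrable _ _)
        (c2.intervalIntegrable _ _)]
      rfl

lemma itInt_append (M : List (Fin n)) (i : Fin n) (G : (Fin n → ℝ) → ℝ) (c : Fin n → ℝ) :
    itInt (M ++ [i]) G c
      = itInt M (fun c' => ∫ t in (0:ℝ)..1, G (Function.update c' i t)) c := by
  induction M generalizing c with
  | nil => rfl
  | cons j M ih =>
      show (∫ s in (0:ℝ)..1, itInt (M ++ [i]) G (Function.update c j s)) = _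
      simp only [ih]
      rfl

lemma itInt_update (M : List (Fin n)) {i : Fin n} (hi : i ∉ M) (H : (Fin n → ℝ) → ℝ)
    (a : ℝ) (c : Fin n → ℝ) :
    itInt M (fun c' => H (Function.update c' i a)) c = itInt M H (Function.update c i a) := by
  induction M generalizing c with
  | nil => rfl
  | cons j M ih =>
      have hij : j ≠ i := fun h => hi (h ▸ (List.mem_cons_self (a := j) (l := M)))
      have hiM : i ∉ M := fun h => hi (List.mem_cons_of_mem _ h)
      show (∫ s in (0:ℝ)..1, itInt M (fun c' => H (Function.update c' i a)) (Function.update c j s))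
        = ∫ s in (0:ℝ)..1, itInt M H (Function.update (Function.update c i a) j s)
      refine intervalIntegral.integral_congr fun s _ => ?_
      rw [ih hiM, Function.update_comm hij]


lemma key {n : ℕ} {F : (Fin n → ℝ) → ℝ} (hF : ContDiff ℝ (⊤ : ℕ∞) F) :
    ∀ (L : List (Fin n)), L.Nodup → ∀ c : Fin n → ℝ,
      itInt L (mixedPartial F L.reverse) c
        = ∑ B ∈ L.toFinset.powerset, (-1 : ℝ) ^ B.card *
            F (fun j => if j ∈ L.toFinset then (if j ∈ B then (0:ℝ) else 1) else c j) := by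
  intro L
  induction L using List.reverseRecOn with
  | nil =>
      intro _ c
      simp [itInt, mixedPartial]
  | append_singleton M i ih =>
      intro hL c
      have hM : M.Nodup := (List.nodup_append'.mp hL).1
      have hiM : i ∉ M := by
        have := (List.nodup_append'.mp hL).2.2
        intro hmem
        exact this hmem (List.mem_singleton_self i)
      have hrev : (M ++ [i]).reverse = i :: M.reverse := by simp
      rw [hrev, itInt_append]
      set G := mixedPartial F M.reverse with hGdef
      have hGc : ContDiff ℝ (⊤ : ℕ∞) G := contDiff_mixedPartial hF _
      have heq : (fun c' => ∫ t in (0:ℝ)..1,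
            mixedPartial F (i :: M.reverse) (Function.update c' i t))
          = fun c' => G (Function.update c' i 1) - G (Function.update c' i 0) := by
        funext c'
        exact integral_pderivI hGc i c'
      have cg1 : Continuous fun c' : Fin n → ℝ => G (Function.update c' i 1) :=
        hGc.continuous.comp (continuous_id.update i continuous_const)
      have cg0 : Continuous fun c' : Fin n → ℝ => G (Function.update c' i 0) :=
        hGc.continuous.comp (continuous_id.update i continuous_const)
      rw [heq, itInt_sub M cg1 cg0 c,
        itInt_update M hiM G 1 c, itInt_update M hiM G 0 c, ih hM, ih hM]
      -- now Finset algebra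
      have hiS : i ∉ M.toFinset := by simpa using hiM
      have hS : (M ++ [i]).toFinset = insert i M.toFinset := by
        ext j; simp [or_comm]
      rw [hS, Finset.sum_powerset_insert hiS]
      have s1 : ∀ B ∈ M.toFinset.powerset,
          (-1 : ℝ) ^ B.card *
            F (fun j => if j ∈ insert i M.toFinset then (if j ∈ B then (0:ℝ) else 1) else c j)
          = (-1 : ℝ) ^ B.card *
            F (fun j => if j ∈ M.toFinset then (if j ∈ B then (0:ℝ) else 1)
                else Function.update c i 1 j) := by
        intro B hB
        have hBS : B ⊆ M.toFinset := Finset.mem_powerset.mp hB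
        congr 1
        congr 1
        funext j
        have hiB : i ∉ B := fun h => hiS (hBS h)
        rcases eq_or_ne j i with rfl | hji
        · simp [hiS, hiB]
        · by_cases hj : j ∈ M.toFinset <;>
            simp [hj, hji, Function.update_apply, Finset.mem_insert]
      have s2 : ∀ B ∈ M.toFinset.powerset,
          (-1 : ℝ) ^ (insert i B).card *
            F (fun j => if j ∈ insert i M.toFinset
                then (if j ∈ insert i B then (0:ℝ) else 1) else c j)
          = -((-1 : ℝ) ^ B.card *
            F (fun j => if j ∈ M.toFinset then (if j ∈ B then (0:ℝ) else 1)
                else Function.update c i 0 j)) := by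
        intro B hB
        have hBS : B ⊆ M.toFinset := Finset.mem_powerset.mp hB
        have hiB : i ∉ B := fun h => hiS (hBS h)
        rw [Finset.card_insert_of_notMem hiB, pow_succ]
        have hpt : (fun j => if j ∈ insert i M.toFinset
              then (if j ∈ insert i B then (0:ℝ) else 1) else c j)
            = fun j => if j ∈ M.toFinset then (if j ∈ B then (0:ℝ) else 1)
                else Function.update c i 0 j := by
          funext j
          rcases eq_or_ne j i with rfl | hji
          · simp [hiS]
          · by_cases hj : j ∈ M.toFinset <;>
              simp [hj, hji, Function.update_apply, Finset.mem_insert]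
        rw [hpt]
        ring
      rw [Finset.sum_congr rfl s1, Finset.sum_congr rfl s2]
      rw [Finset.sum_neg_distrib]
      ring

lemma integral_Icc_zero (g : (Fin 0 → ℝ) → ℝ) (x : Fin 0 → ℝ) :
    ∫ y in Set.Icc (0 : Fin 0 → ℝ) 1, g y = g x := by
  have h0 : ∀ y : Fin 0 → ℝ, g y = g x := fun y => by rw [Subsingleton.elim y x]
  calc ∫ y in Set.Icc (0 : Fin 0 → ℝ) 1, g y
      = ∫ _ in Set.Icc (0 : Fin 0 → ℝ) 1, g x := by simp only [h0]
    _ = g x := by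
        rw [setIntegral_const, measureReal_def, Real.volume_Icc_pi]
        simp

lemma integral_Icc_succ (m : ℕ) (g : (Fin (m+1) → ℝ) → ℝ) (hg : Continuous g) :
    ∫ y in Set.Icc (0 : Fin (m+1) → ℝ) 1, g y
      = ∫ t in (0:ℝ)..1, ∫ y in Set.Icc (0 : Fin m → ℝ) 1, g (Fin.cons t y) := by
  have hmp := (volume_preserving_piFinSuccAbove (fun _ : Fin (m+1) => ℝ) 0).symm
  have hemb := (MeasurableEquiv.piFinSuccAbove (fun _ : Fin (m+1) => ℝ) 0).symm.measurableEmbedding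
  have hcoe : ⇑(MeasurableEquiv.piFinSuccAbove (fun _ : Fin (m+1) => ℝ) 0).symm
      = fun z : ℝ × (Fin m → ℝ) => Fin.cons z.1 z.2 := by
    funext z
    show (Fin.insertNthEquiv (fun _ => ℝ) 0) z = _
    simp [Fin.insertNthEquiv, Fin.insertNth_zero]
  have hpre : (MeasurableEquiv.piFinSuccAbove (fun _ : Fin (m+1) => ℝ) 0).symm ⁻¹'
      (Set.Icc 0 1) = Set.Icc (0:ℝ) 1 ×ˢ Set.Icc (0 : Fin m → ℝ) 1 := by
    ext z
    simp only [Set.mem_preimage, hcoe, Set.mem_Icc, Set.mem_prod, Pi.le_def]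
    constructor
    · rintro ⟨h1, h2⟩
      refine ⟨⟨?_, ?_⟩, ⟨fun j => ?_, fun j => ?_⟩⟩
      · simpa using h1 0
      · simpa using h2 0
      · simpa using h1 j.succ
      · simpa using h2 j.succ
    · rintro ⟨⟨ha, hb⟩, hc, hd⟩
      refine ⟨fun j => ?_, fun j => ?_⟩ <;> refine Fin.cases ?_ (fun k => ?_) j
      · simpa using ha
      · simpa using hc k
      · simpa using hb
      · simpa using hd k
  have hcons : Continuous fun z : ℝ × (Fin m → ℝ) => (Fin.cons z.1 z.2 : Fin (m+1) → ℝ) := by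
    apply continuous_pi; intro j
    refine Fin.cases ?_ (fun k => ?_) j
    · simpa using (continuous_fst : Continuous fun z : ℝ × (Fin m → ℝ) => z.1)
    · simpa [Function.comp_def] using ((continuous_apply k).comp
        (continuous_snd : Continuous fun z : ℝ × (Fin m → ℝ) => z.2))
  have hint : IntegrableOn (fun z : ℝ × (Fin m → ℝ) => g (Fin.cons z.1 z.2))
      (Set.Icc (0:ℝ) 1 ×ˢ Set.Icc (0 : Fin m → ℝ) 1) volume :=
    (hg.comp hcons).continuousOn.integrableOn_compact (isCompact_Icc.prod isCompact_Icc)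
  rw [Measure.volume_eq_prod] at hint
  rw [← hmp.setIntegral_preimage_emb hemb g (Set.Icc 0 1), hpre]
  simp only [hcoe]
  rw [Measure.volume_eq_prod, setIntegral_prod _ hint]
  rw [intervalIntegral.integral_of_le zero_le_one, integral_Icc_eq_integral_Ioc]


def extNat (m : ℕ) (y : Fin m → ℝ) : ℕ → ℝ := fun k => if h : k < m then y ⟨k, h⟩ else 0

lemma continuous_extNat (m : ℕ) : Continuous (extNat m) := by
  apply continuous_pi
  intro k
  by_cases h : k < m
  · simp only [extNat, dif_pos h]
    exact continuous_apply _
  · simp only [extNat, dif_neg h]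
    exact continuous_const

def assemble {n : ℕ} : List (Fin n) → (ℕ → ℝ) → (Fin n → ℝ) → Fin n → ℝ
  | [], _, c => c
  | i :: L, z, c => assemble L (fun k => z (k + 1)) (Function.update c i (z 0))

lemma continuous_assemble {n : ℕ} (L : List (Fin n)) :
    Continuous (fun p : (ℕ → ℝ) × (Fin n → ℝ) => assemble L p.1 p.2) := by
  induction L with
  | nil => exact continuous_snd
  | cons i L ih =>
      show Continuous fun p : (ℕ → ℝ) × (Fin n → ℝ) =>
        assemble L (fun k => p.1 (k + 1)) (Function.update p.2 i (p.1 0))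
      have hc1 : Continuous fun p : (ℕ → ℝ) × (Fin n → ℝ) => (fun k => p.1 (k+1) : ℕ → ℝ) :=
        continuous_pi fun k => (continuous_apply (k+1)).comp continuous_fst
      have hc2 : Continuous fun p : (ℕ → ℝ) × (Fin n → ℝ) =>
          Function.update p.2 i (p.1 0) :=
        continuous_snd.update i ((continuous_apply 0).comp continuous_fst)
      exact ih.comp (hc1.prodMk hc2)

lemma bridge {n : ℕ} (H : (Fin n → ℝ) → ℝ) (hH : Continuous H) :
    ∀ (L : List (Fin n)) (m : ℕ), L.length = m → ∀ c : Fin n → ℝ,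
      ∫ y in Set.Icc (0 : Fin m → ℝ) 1, H (assemble L (extNat m y) c) = itInt L H c := by
  intro L
  induction L with
  | nil =>
      intro m hm c
      subst hm
      exact integral_Icc_zero _ 0
  | cons i L ih =>
      intro m hm c
      subst hm
      have hcont : Continuous fun y : Fin (L.length + 1) → ℝ =>
          H (assemble (i :: L) (extNat (L.length + 1) y) c) :=
        hH.comp ((continuous_assemble (i :: L)).comp
          ((continuous_extNat _).prodMk continuous_const))
      change (∫ y in Set.Icc (0 : Fin (L.length + 1) → ℝ) 1,
        H (assemble (i :: L) (extNat (L.length + 1) y) c)) = itInt (i :: L) H c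
      rw [integral_Icc_succ L.length _ hcont]
      show _ = ∫ t in (0:ℝ)..1, itInt L H (Function.update c i t)
      refine intervalIntegral.integral_congr fun t _ => ?_
      rw [← ih L.length rfl (Function.update c i t)]
      have hfun : (fun y : Fin L.length → ℝ =>
            H (assemble (i :: L) (extNat (L.length + 1) (Fin.cons t y)) c))
          = fun y => H (assemble L (extNat L.length y) (Function.update c i t)) := by
        funext y
        show H (assemble L (fun k => extNat (L.length + 1) (Fin.cons t y) (k + 1))
          (Function.update c i (extNat (L.length + 1) (Fin.cons t y) 0))) = _
        have h0 : extNat (L.length + 1) (Fin.cons t y) 0 = t := by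
          simp [extNat]
        have h1 : (fun k => extNat (L.length + 1) (Fin.cons t y) (k + 1))
            = extNat L.length y := by
          funext k
          by_cases h : k < L.length
          · have h' : k + 1 < L.length + 1 := Nat.succ_lt_succ h
            have hmk : (⟨k + 1, h'⟩ : Fin (L.length + 1)) = Fin.succ ⟨k, h⟩ := rfl
            simp only [extNat]
            rw [dif_pos h', dif_pos h, hmk, Fin.cons_succ]
          · have h' : ¬ (k + 1 < L.length + 1) := fun hc => h (Nat.lt_of_succ_lt_succ hc)
            simp [extNat, h, h']
        rw [h0, h1]
      rw [hfun]


lemma assemble_reverse {n : ℕ} :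
    ∀ (l : ℕ) (hl : l ≤ n) (z : ℕ → ℝ) (c : Fin n → ℝ),
      assemble (((List.finRange l).map (Fin.castLE hl)).reverse) z c
        = fun j : Fin n => if (j : ℕ) < l then z (l - 1 - (j : ℕ)) else c j := by
  intro l
  induction l with
  | zero =>
      intro hl z c
      funext j
      show c j = _
      simp
  | succ l ih =>
      intro hl z c
      have hl' : l ≤ n := Nat.le_of_succ_le hl
      have hcomp : (Fin.castLE hl) ∘ (Fin.castSucc : Fin l → Fin (l+1))
          = Fin.castLE hl' := by
        funext k; exact Fin.ext rfl
      have hlist : (((List.finRange (l+1)).map (Fin.castLE hl)).reverse : List (Fin n))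
          = Fin.castLE hl (Fin.last l) :: ((List.finRange l).map (Fin.castLE hl')).reverse := by
        rw [List.finRange_succ_last, List.map_append, List.reverse_append, List.map_map, hcomp]
        simp
      rw [hlist]
      show assemble ((List.finRange l).map (Fin.castLE hl')).reverse (fun k => z (k + 1))
        (Function.update c (Fin.castLE hl (Fin.last l)) (z 0)) = _
      rw [ih hl']
      funext j
      by_cases h : (j : ℕ) < l
      · have h1 : (j : ℕ) < l + 1 := Nat.lt_succ_of_lt h
        have harith : l - 1 - (j : ℕ) + 1 = l + 1 - 1 - (j : ℕ) := by omega
        simp only [if_pos h, if_pos h1, harith]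
      · by_cases hj : (j : ℕ) = l
        · have h1 : (j : ℕ) < l + 1 := by omega
          have hji : j = Fin.castLE hl (Fin.last l) := Fin.ext (by simpa using hj)
          have harith : l + 1 - 1 - (j : ℕ) = 0 := by omega
          rw [if_neg h, if_pos h1, harith, hji, Function.update_self]
        · have h1 : ¬ ((j : ℕ) < l + 1) := by omega
          have hji : j ≠ Fin.castLE hl (Fin.last l) := by
            intro hcon
            exact hj (by simpa using congrArg Fin.val hcon)
          simp only [if_neg h, if_neg h1, Function.update_of_ne hji]

lemma integral_Icc_comp_rev (l : ℕ) (g : (Fin l → ℝ) → ℝ) :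
    ∫ y in Set.Icc (0 : Fin l → ℝ) 1, g (fun j => y (Fin.rev j))
      = ∫ y in Set.Icc (0 : Fin l → ℝ) 1, g y := by
  have hmp := (volume_measurePreserving_piCongrLeft (fun _ : Fin l => ℝ) Fin.revPerm).symm
  have hemb :=
    (MeasurableEquiv.piCongrLeft (fun _ : Fin l => ℝ) Fin.revPerm).symm.measurableEmbedding
  have hcoe : ⇑(MeasurableEquiv.piCongrLeft (fun _ : Fin l => ℝ) Fin.revPerm).symm
      = fun (y : Fin l → ℝ) (j : Fin l) => y (Fin.rev j) := by
    funext y j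
    show (Equiv.piCongrLeft (fun _ : Fin l => ℝ) Fin.revPerm).symm y j = _
    simp [Equiv.piCongrLeft, Equiv.piCongrLeft']
  have hpre : (MeasurableEquiv.piCongrLeft (fun _ : Fin l => ℝ) Fin.revPerm).symm ⁻¹'
      (Set.Icc 0 1) = Set.Icc (0 : Fin l → ℝ) 1 := by
    ext y
    simp only [Set.mem_preimage, hcoe, Set.mem_Icc, Pi.le_def]
    constructor
    · rintro ⟨h1, h2⟩
      exact ⟨fun j => by simpa using h1 (Fin.rev j),
        fun j => by simpa [Fin.rev_rev] using h2 (Fin.rev j)⟩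
    · rintro ⟨h1, h2⟩
      exact ⟨fun j => by simpa using h1 (Fin.rev j), fun j => by simpa using h2 (Fin.rev j)⟩
  have := hmp.setIntegral_preimage_emb hemb g (Set.Icc 0 1)
  rw [hpre] at this
  rw [← this]
  simp only [hcoe]

/-- The iterated integral over `[0,1]^ℓ` of the mixed partial derivative
`∂^ℓ F/∂x_1⋯∂x_ℓ` (the last `n - ℓ` coordinates fixed at `c`) equals the alternating sum
`∑_{B ⊆ {1,…,ℓ}} (-1)^{|B|} F(y_B)`, where `y_B` has coordinate `0` on `B`, `1` on
`{1,…,ℓ} \ B`, and `c_i` for `i > ℓ`. -/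
theorem integral_mixed_partial_eq_alternating_sum
    {n : ℕ} (F : (Fin n → ℝ) → ℝ) (hF : ContDiff ℝ (⊤ : ℕ∞) F)
    (l : ℕ) (hl : l ≤ n) (c : Fin n → ℝ) :
    (∫ y in Set.Icc (0 : Fin l → ℝ) 1,
        mixedPartial F ((List.finRange l).map (Fin.castLE hl))
          (fun i : Fin n => if h : (i : ℕ) < l then y ⟨i, h⟩ else c i)) =
      ∑ B ∈ ((Finset.univ : Finset (Fin n)).filter (fun i : Fin n => (i : ℕ) < l)).powerset,
        (-1 : ℝ) ^ B.card *
          F (fun i : Fin n => if (i : ℕ) < l then (if i ∈ B then (0 : ℝ) else 1) else c i) := by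
  set LIST : List (Fin n) := (List.finRange l).map (Fin.castLE hl) with hLIST
  set G : (Fin n → ℝ) → ℝ := mixedPartial F LIST with hG
  have hGc : Continuous G := (contDiff_mixedPartial hF LIST).continuous
  have h1 : (∫ y in Set.Icc (0 : Fin l → ℝ) 1,
        G (fun i : Fin n => if h : (i : ℕ) < l then y ⟨i, h⟩ else c i))
      = ∫ y in Set.Icc (0 : Fin l → ℝ) 1, G (assemble LIST.reverse (extNat l y) c) := by
    rw [← integral_Icc_comp_rev l
      (fun y => G (fun i : Fin n => if h : (i : ℕ) < l then y ⟨i, h⟩ else c i))]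
    have hfun : ∀ y : Fin l → ℝ,
        G (fun i : Fin n => if h : (i : ℕ) < l then (fun j => y (Fin.rev j)) ⟨i, h⟩ else c i)
        = G (assemble LIST.reverse (extNat l y) c) := by
      intro y
      congr 1
      rw [assemble_reverse l hl (extNat l y) c]
      funext j
      by_cases h : (j : ℕ) < l
      · rw [dif_pos h, if_pos h]
        have hlt : l - 1 - (j : ℕ) < l := by omega
        have hext : extNat l y (l - 1 - (j : ℕ)) = y ⟨l - 1 - (j : ℕ), hlt⟩ := dif_pos hlt
        rw [hext]
        show y (Fin.rev ⟨(j : ℕ), h⟩) = y ⟨l - 1 - (j : ℕ), hlt⟩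
        congr 1
        refine Fin.ext ?_
        simp only [Fin.val_rev]
        omega
      · rw [dif_neg h, if_neg h]
    simp only [hfun]
  rw [h1]
  have hlen : LIST.reverse.length = l := by simp [hLIST]
  rw [bridge G hGc LIST.reverse l hlen c]
  have hnod : LIST.reverse.Nodup := by
    simp only [List.nodup_reverse]
    exact (List.nodup_finRange l).map (Fin.castLE_injective hl)
  have h3 := key hF LIST.reverse hnod c
  rw [List.reverse_reverse] at h3
  rw [h3]
  have hset : LIST.reverse.toFinset
      = Finset.univ.filter (fun i : Fin n => (i : ℕ) < l) := by
    ext j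
    simp only [List.mem_toFinset, Finset.mem_filter, Finset.mem_univ, true_and,
      List.mem_reverse, hLIST, List.mem_map, List.mem_finRange, true_and]
    constructor
    · rintro ⟨a, -, rfl⟩
      exact a.isLt
    · intro h
      exact ⟨⟨j, h⟩, Fin.ext rfl⟩
  rw [hset]
  refine Finset.sum_congr rfl fun B hB => ?_
  congr 1
  congr 1
  funext j
  by_cases h : (j : ℕ) < l <;> simp [h]


end
end

section
/- Let Gt = (V, E, {f_v}) be a general threshold instance on an arbitrary finite directed graph. If f_v is AD-∞ for every node v ∈ V (Gt is locally AD-∞), then the spread function σ is AD-∞ (Gt is globally AD-∞). -/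
open MeasureTheory Finset
open scoped Classical

noncomputable section


variable {V : Type*} [Fintype V] [DecidableEq V]

/-!
An AD-∞ threshold function `f` with `f ∅ = 0` and `f ≤ 1` is the hitting function of a random
triggering set: the Möbius weights `w A = (-1)^(|A|+1) Δ_A f (Aᶜ)` (with the remaining mass
`1 - f univ` on `∅`) are nonnegative, sum to one, and give mass `f C` to the sets meeting `C`.
Replacing each uniform threshold by an independent triggering set with these weights does not
change the law of the cascade trajectory: that law factors over the nodes, and along a monotone
trajectory the factor of a node only involves probabilities of nested events "hit by `C_t`".
In the triggering model `v` ends up active iff the seed set meets the set of nodes whose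
singleton cascade reaches `v`, so `σ` is a nonnegative combination of the AD-∞ functions
`T ↦ [T ∩ R ≠ ∅]`.
-/

theorem Finset.sum_Icc_neg_one_pow_card {R α : Type*} [CommRing R] [DecidableEq α]
    {E D : Finset α} (h : E ⊆ D) :
    ∑ A ∈ Icc E D, (-1 : R) ^ A.card = if E = D then (-1) ^ D.card else 0 := by
  have hdisj : ∀ X ∈ (D \ E).powerset, Disjoint E X := fun X hX =>
    disjoint_of_subset_right (mem_powerset.1 hX) disjoint_sdiff
  have hinj : Set.InjOn (E ∪ ·) (D \ E).powerset := by
    intro X hX Y hY hXY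
    simpa [union_sdiff_cancel_left (hdisj X hX), union_sdiff_cancel_left (hdisj Y hY)] using
      congrArg (· \ E) hXY
  rw [Icc_eq_image_powerset h, sum_image hinj, sum_congr rfl fun X hX => by
    rw [card_union_of_disjoint (hdisj X hX), pow_add], ← mul_sum]
  have hpow := congrArg (Int.cast : ℤ → R) (sum_powerset_neg_one_pow_card (x := D \ E))
  push_cast at hpow
  rw [hpow]
  by_cases hED : E = D
  · simp [hED]
  · rw [if_neg hED, if_neg fun h' => hED (h.antisymm (sdiff_eq_empty_iff_subset.1 h')),
      mul_zero]

theorem adDiff_sum {α ι : Type*} [DecidableEq α] (s : Finset ι) (a : ι → ℝ)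
    (g : ι → Finset α → ℝ) (A S : Finset α) :
    adDiff (fun T => ∑ i ∈ s, a i * g i T) A S = ∑ i ∈ s, a i * adDiff (g i) A S := by
  simp only [adDiff, mul_sum]
  rw [sum_comm]
  exact sum_congr rfl fun _ _ => sum_congr rfl fun _ _ => by ring

theorem isADk_sum {α ι : Type*} [DecidableEq α] (s : Finset ι) {a : ι → ℝ}
    {g : ι → Finset α → ℝ} {k : ℕ}
    (ha : ∀ i ∈ s, 0 ≤ a i) (hg : ∀ i ∈ s, IsADk (g i) k) :
    IsADk (fun T => ∑ i ∈ s, a i * g i T) k := by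
  intro A S hA hAk
  rw [adDiff_sum, mul_sum]
  exact sum_nonneg fun i hi => by
    rw [mul_left_comm]
    exact mul_nonneg (ha i hi) (hg i hi A S hA hAk)

theorem isADk_ite_inter_nonempty {α : Type*} [DecidableEq α] (R : Finset α) (k : ℕ) :
    IsADk (fun T => if (T ∩ R).Nonempty then 1 else 0) k := by
  intro A S hA _
  have hpow : ∑ B ∈ A.powerset, (-1 : ℝ) ^ B.card = 0 := by
    exact_mod_cast sum_powerset_neg_one_pow_card_of_nonempty hA
  by_cases hS : (S ∩ R).Nonempty
  · have hconst : adDiff (fun T => if (T ∩ R).Nonempty then (1 : ℝ) else 0) A S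
        = ∑ B ∈ A.powerset, (-1 : ℝ) ^ B.card := sum_congr rfl fun B _ => by
      dsimp only
      rw [if_pos (hS.mono (inter_subset_inter subset_union_left subset_rfl)), mul_one]
    rw [hconst, hpow, mul_zero]
  · have hmeet : ∀ B, ((S ∪ (A \ B)) ∩ R).Nonempty ↔ ¬ A ∩ R ⊆ B := by
      intro B
      rw [union_inter_distrib_right, not_nonempty_iff_eq_empty.1 hS, empty_union,
        not_subset]
      simp only [Finset.Nonempty, mem_inter, mem_sdiff]
      constructor
      · rintro ⟨x, ⟨hxA, hxB⟩, hxR⟩; exact ⟨x, ⟨hxA, hxR⟩, hxB⟩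
      · rintro ⟨x, ⟨hxA, hxR⟩, hxB⟩; exact ⟨x, ⟨hxA, hxB⟩, hxR⟩
    have hdiff : adDiff (fun T => if (T ∩ R).Nonempty then (1 : ℝ) else 0) A S
        = ∑ B ∈ A.powerset, (-1 : ℝ) ^ B.card
          - ∑ B ∈ Icc (A ∩ R) A, (-1 : ℝ) ^ B.card := by
      rw [Icc_eq_filter_powerset, sum_filter, ← sum_sub_distrib]
      refine sum_congr rfl fun B _ => ?_
      simp only [hmeet]
      split_ifs <;> ring
    rw [hdiff, hpow, sum_Icc_neg_one_pow_card inter_subset_left]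
    split_ifs
    · rw [zero_sub, mul_neg, ← pow_add, Odd.neg_one_pow ⟨A.card, by ring⟩]
      norm_num
    · simp

section TriggerWeight

variable {α : Type*} [Fintype α] [DecidableEq α]

-- The probability that the triggering set of a node is exactly `A`, obtained by Möbius inversion
-- of `D ↦ 1 - f Dᶜ`, the probability that it lies inside `D`.
def triggerWeight (f : Finset α → ℝ) (A : Finset α) : ℝ :=
  (if A = ∅ then 1 else 0) + (-1) ^ (A.card + 1) * adDiff f A Aᶜ

theorem sum_powerset_neg_one_pow_mul_adDiff_compl (f : Finset α → ℝ) (D : Finset α) :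
    ∑ A ∈ D.powerset, (-1 : ℝ) ^ (A.card + 1) * adDiff f A Aᶜ = -f Dᶜ := by
  have hexpand : ∀ A ∈ D.powerset, (-1 : ℝ) ^ (A.card + 1) * adDiff f A Aᶜ
      = ∑ B ∈ A.powerset, (-1 : ℝ) ^ A.card * -((-1) ^ B.card * f Bᶜ) := by
    intro A _
    rw [adDiff, mul_sum]
    refine sum_congr rfl fun B hB => ?_
    have hcompl : Aᶜ ∪ (A \ B) = Bᶜ := by
      ext x
      have := @mem_powerset.1 hB x
      simp only [mem_union, mem_compl, mem_sdiff]
      tauto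
    rw [hcompl, pow_succ]
    ring
  rw [sum_congr rfl hexpand, sum_comm' (t' := D.powerset) (s' := fun B => Icc B D)]
  · simp only [← sum_mul]
    rw [sum_congr rfl fun B hB => by rw [sum_Icc_neg_one_pow_card (mem_powerset.1 hB)]]
    simp only [ite_mul, zero_mul]
    rw [sum_ite_eq' D.powerset D, if_pos (mem_powerset_self D), mul_neg, ← mul_assoc,
      ← pow_add, ← two_mul, pow_mul]
    norm_num
  · intro A B
    simp only [mem_powerset, mem_Icc]
    constructor
    · rintro ⟨hAD, hBA⟩; exact ⟨⟨hBA, hAD⟩, hBA.trans hAD⟩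
    · rintro ⟨⟨hBA, hAD⟩, _⟩; exact ⟨hAD, hBA⟩

theorem sum_powerset_triggerWeight (f : Finset α → ℝ) (D : Finset α) :
    ∑ A ∈ D.powerset, triggerWeight f A = 1 - f Dᶜ := by
  simp only [triggerWeight, sum_add_distrib, sum_powerset_neg_one_pow_mul_adDiff_compl]
  rw [sum_ite_eq' D.powerset ∅, if_pos (empty_mem_powerset D), sub_eq_add_neg]

theorem triggerWeight_nonneg {f : Finset α → ℝ} (hf : IsADk f (Fintype.card α))
    (hf1 : f univ ≤ 1) (A : Finset α) : 0 ≤ triggerWeight f A := by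
  rcases A.eq_empty_or_nonempty with rfl | hA
  · simpa [triggerWeight, adDiff] using hf1
  · rw [triggerWeight, if_neg hA.ne_empty, zero_add]
    exact hf A Aᶜ hA (card_le_univ A)

end TriggerWeight

section CompatibleRules

variable {ι α : Type*}

def compatibleRules (H : Finset ι → Set α) (c : ℕ → Finset ι) (n : ℕ) (u : ι) :
    Set α :=
  {x | ∀ t < n, (u ∈ c (t + 1) ↔ u ∈ c t ∨ x ∈ H (c t))}

def missSet (H : Finset ι → Set α) (c : ℕ → Finset ι) (m : ℕ) : Set α :=
  {x | ∀ t < m, x ∉ H (c t)}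

def extendTraj {n : ℕ} (c : Fin (n + 1) → Finset ι) (t : ℕ) : Finset ι :=
  c (Fin.clamp t n)

theorem exists_drop_of_not_monotone {n : ℕ} {c : Fin (n + 1) → Finset ι}
    (h : ¬ Monotone (extendTraj c)) :
    ∃ t < n, ∃ u, u ∈ extendTraj c t ∧ u ∉ extendTraj c (t + 1) := by
  by_contra hne
  push Not at hne
  refine h (monotone_nat_of_le_succ fun t u hu => ?_)
  by_cases ht : t < n
  · exact hne t ht u hu
  · have hclamp : Fin.clamp (t + 1) n = Fin.clamp t n := Fin.ext (by simp [Fin.clamp]; omega)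
    rwa [extendTraj, hclamp]

variable {H : Finset ι → Set α} {c : ℕ → Finset ι} {n : ℕ} {u : ι}

theorem compatibleRules_eq_univ (hc : Monotone c) (h0 : u ∈ c 0) :
    compatibleRules H c n u = Set.univ :=
  Set.eq_univ_of_forall fun _ _ _ =>
    iff_of_true (hc (Nat.zero_le _) h0) (Or.inl (hc (Nat.zero_le _) h0))

theorem compatibleRules_eq_missSet (hc : Monotone c) (hn : u ∉ c n) :
    compatibleRules H c n u = missSet H c n := by
  ext x
  refine forall₂_congr fun t ht => ?_
  have hnot : ∀ s ≤ n, u ∉ c s := fun s hs h => hn (hc hs h)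
  simp [hnot t ht.le, hnot (t + 1) ht]

theorem compatibleRules_eq_missSet_sdiff (hc : Monotone c) {j : ℕ} (hj : j < n)
    (hj0 : u ∉ c j) (hj1 : u ∈ c (j + 1)) :
    compatibleRules H c n u = missSet H c j \ missSet H c (j + 1) := by
  have hbefore : ∀ s ≤ j, u ∉ c s := fun s hs h => hj0 (hc hs h)
  have hafter : ∀ s, j + 1 ≤ s → u ∈ c s := fun s hs => hc hs hj1
  ext x
  simp only [compatibleRules, missSet, Set.mem_sdiff, Set.mem_ofPred_eq, not_forall]
  constructor
  · intro h
    refine ⟨fun t ht => ?_, j, j.lt_succ_self, not_not.2 ?_⟩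
    · simpa [hbefore t ht.le, hbefore (t + 1) ht] using h t (ht.trans hj)
    · simpa [hj0, hj1] using h j hj
  · rintro ⟨hmiss, t, ht, hx⟩ s hs
    have hxj : x ∈ H (c j) := by
      obtain rfl : t = j := by
        by_contra hne
        exact hx (hmiss t (by omega))
      exact not_not.1 hx
    rcases lt_trichotomy s j with hsj | rfl | hsj
    · simp [hbefore s hsj.le, hbefore (s + 1) hsj, hmiss s hsj]
    · simp [hj1, hxj]
    · simp [hafter s hsj, hafter (s + 1) (by omega)]

theorem compatibleRules_eq_empty {t : ℕ} (ht : t < n) (hu : u ∈ c t) (hu' : u ∉ c (t + 1)) :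
    compatibleRules H c n u = ∅ :=
  Set.eq_empty_of_forall_notMem fun _ h => hu' ((h t ht).2 (Or.inl hu))

theorem missSet_succ_subset (m : ℕ) : missSet H c (m + 1) ⊆ missSet H c m :=
  fun _ hx t ht => hx t (ht.trans m.lt_succ_self)

theorem missSet_zero : missSet H c 0 = Set.univ :=
  Set.eq_univ_of_forall fun _ t ht => absurd ht t.not_lt_zero

theorem missSet_succ (hH : Monotone H) (hc : Monotone c) (m : ℕ) :
    missSet H c (m + 1) = (H (c m))ᶜ := by
  ext x
  simp only [missSet, Set.mem_ofPred_eq, Set.mem_compl_iff]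
  exact ⟨fun h => h m m.lt_succ_self, fun h t ht hx => h (hH (hc (Nat.le_of_lt_succ ht)) hx)⟩

end CompatibleRules

section HitCascade

variable {ι α : Type*} [Fintype ι] [DecidableEq ι]

-- The threshold model is `H u C = Set.Iic (f u C)`, the triggering model `H u C = meetSet C`.
def hitCascade (H : ι → Finset ι → Set α) (r : ι → α) (S : Finset ι) : ℕ → Finset ι
  | 0 => S
  | t + 1 => hitCascade H r S t ∪ univ.filter fun u => r u ∈ H u (hitCascade H r S t)

def hitTraj (H : ι → Finset ι → Set α) (S : Finset ι) (n : ℕ) (r : ι → α) :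
    Fin (n + 1) → Finset ι :=
  fun i => hitCascade H r S i

variable {H : ι → Finset ι → Set α} {S : Finset ι} {n : ℕ} {r : ι → α}

theorem hitCascade_eq_iff {c : ℕ → Finset ι} :
    (∀ t ≤ n, hitCascade H r S t = c t) ↔
      c 0 = S ∧ ∀ u, r u ∈ compatibleRules (H u) c n u := by
  constructor
  · intro h
    refine ⟨(h 0 n.zero_le).symm, fun u t ht => ?_⟩
    rw [← h t ht.le, ← h (t + 1) ht, hitCascade]
    simp
  · rintro ⟨h0, hstep⟩ t ht
    induction t with
    | zero => exact h0.symm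
    | succ t ih =>
      ext u
      rw [hitCascade, ih (by omega), hstep u t (by omega)]
      simp

theorem hitTraj_eq_iff {c : Fin (n + 1) → Finset ι} :
    hitTraj H S n r = c ↔ ∀ t ≤ n, hitCascade H r S t = extendTraj c t := by
  have hclamp : ∀ t (ht : t ≤ n), Fin.clamp t n = ⟨t, Nat.lt_succ_of_le ht⟩ := fun t ht =>
    Fin.ext (min_eq_left ht)
  rw [funext_iff]
  constructor
  · intro h t ht
    rw [extendTraj, hclamp t ht, ← h]
    rfl
  · intro h i
    rw [hitTraj, h i i.is_le, extendTraj, hclamp i i.is_le]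

variable (H S)

theorem hitTraj_preimage_singleton (c : Fin (n + 1) → Finset ι) :
    hitTraj H S n ⁻¹' {c} = if extendTraj c 0 = S then
      Set.univ.pi fun u => compatibleRules (H u) (extendTraj c) n u else ∅ := by
  ext r
  split_ifs with h0 <;> simp [hitTraj_eq_iff, hitCascade_eq_iff, h0]

theorem setOf_mem_hitCascade (v : ι) :
    {r | v ∈ hitCascade H r S n}
      = hitTraj H S n ⁻¹'
          ↑(univ.filter fun c : Fin (n + 1) → Finset ι => v ∈ c (Fin.last n)) := by
  ext r
  simp [hitTraj]

end HitCascade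

section HitLaw

variable {ι α β : Type*} [MeasurableSpace α] [MeasurableSpace β]

theorem measurableSet_missSet {H : Finset ι → Set α} (hH : ∀ C, MeasurableSet (H C))
    (c : ℕ → Finset ι) (m : ℕ) : MeasurableSet (missSet H c m) :=
  measurableSet_setOfPred.2 (by fun_prop (disch := exact hH _))

theorem measurableSet_compatibleRules {H : Finset ι → Set α} (hH : ∀ C, MeasurableSet (H C))
    (c : ℕ → Finset ι) (n : ℕ) (u : ι) : MeasurableSet (compatibleRules H c n u) :=
  measurableSet_setOfPred.2 (by fun_prop (disch := exact hH _))

theorem measure_compatibleRules_eq {μ : Measure α} {ν : Measure β} [IsProbabilityMeasure μ]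
    [IsProbabilityMeasure ν] {H : Finset ι → Set α} {G : Finset ι → Set β}
    (hH : Monotone H) (hG : Monotone G) (hHm : ∀ C, MeasurableSet (H C))
    (hGm : ∀ C, MeasurableSet (G C)) (hHG : ∀ C, μ (H C) = ν (G C))
    {c : ℕ → Finset ι} (hc : Monotone c) (n : ℕ) (u : ι) :
    μ (compatibleRules H c n u) = ν (compatibleRules G c n u) := by
  -- the compatible rules form `univ`, a miss set or a difference of two nested miss sets, and
  -- a miss set is the complement of a single hit set
  have hmiss : ∀ m, μ (missSet H c m) = ν (missSet G c m) := by
    rintro (_ | m)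
    · simp [missSet_zero]
    · rw [missSet_succ hH hc, missSet_succ hG hc, prob_compl_eq_one_sub (hHm _),
        prob_compl_eq_one_sub (hGm _), hHG]
  by_cases h0 : u ∈ c 0
  · simp [compatibleRules_eq_univ hc h0]
  by_cases hn : u ∈ c n
  · obtain ⟨j, hj0, hj1⟩ :=
      Nat.exists_not_and_succ_of_not_zero_of_exists (p := (u ∈ c ·)) h0 ⟨n, hn⟩
    have hj : j < n := lt_of_not_ge fun h => hj0 (hc h hn)
    rw [compatibleRules_eq_missSet_sdiff hc hj hj0 hj1,
      compatibleRules_eq_missSet_sdiff hc hj hj0 hj1,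
      measure_sdiff (missSet_succ_subset j) (measurableSet_missSet hHm c _).nullMeasurableSet
        (measure_ne_top _ _),
      measure_sdiff (missSet_succ_subset j) (measurableSet_missSet hGm c _).nullMeasurableSet
        (measure_ne_top _ _), hmiss, hmiss]
  · rw [compatibleRules_eq_missSet hc hn, compatibleRules_eq_missSet hc hn, hmiss]

variable [Fintype ι] [DecidableEq ι]

theorem measurableSet_hitTraj_preimage {H : ι → Finset ι → Set α}
    (hHm : ∀ u C, MeasurableSet (H u C)) (S : Finset ι) {n : ℕ}
    (c : Fin (n + 1) → Finset ι) :
    MeasurableSet (hitTraj H S n ⁻¹' {c}) := by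
  rw [hitTraj_preimage_singleton]
  split_ifs
  · exact .univ_pi fun u => measurableSet_compatibleRules (hHm u) _ n u
  · exact .empty

theorem measure_hitTraj_preimage_eq {μ : ι → Measure α} {ν : ι → Measure β}
    [∀ u, IsProbabilityMeasure (μ u)] [∀ u, IsProbabilityMeasure (ν u)]
    {H : ι → Finset ι → Set α} {G : ι → Finset ι → Set β}
    (hH : ∀ u, Monotone (H u)) (hG : ∀ u, Monotone (G u))
    (hHm : ∀ u C, MeasurableSet (H u C)) (hGm : ∀ u C, MeasurableSet (G u C))
    (hHG : ∀ u C, μ u (H u C) = ν u (G u C)) (S : Finset ι) {n : ℕ}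
    (c : Fin (n + 1) → Finset ι) :
    Measure.pi μ (hitTraj H S n ⁻¹' {c}) = Measure.pi ν (hitTraj G S n ⁻¹' {c}) := by
  rw [hitTraj_preimage_singleton, hitTraj_preimage_singleton]
  split_ifs
  · rw [Measure.pi_pi, Measure.pi_pi]
    by_cases hc : Monotone (extendTraj c)
    · exact prod_congr rfl fun u _ =>
        measure_compatibleRules_eq (hH u) (hG u) (hHm u) (hGm u) (hHG u) hc n u
    · -- a node that leaves the trajectory has no compatible rule, on either side
      obtain ⟨t, ht, u, hu, hu'⟩ := exists_drop_of_not_monotone hc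
      rw [prod_eq_zero (mem_univ u) (by rw [compatibleRules_eq_empty ht hu hu', measure_empty]),
        prod_eq_zero (mem_univ u) (by rw [compatibleRules_eq_empty ht hu hu', measure_empty])]
  · simp

theorem measure_mem_hitCascade_eq {μ : ι → Measure α} {ν : ι → Measure β}
    [∀ u, IsProbabilityMeasure (μ u)] [∀ u, IsProbabilityMeasure (ν u)]
    {H : ι → Finset ι → Set α} {G : ι → Finset ι → Set β}
    (hH : ∀ u, Monotone (H u)) (hG : ∀ u, Monotone (G u))
    (hHm : ∀ u C, MeasurableSet (H u C)) (hGm : ∀ u C, MeasurableSet (G u C))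
    (hHG : ∀ u C, μ u (H u C) = ν u (G u C)) (S : Finset ι) (n : ℕ) (v : ι) :
    Measure.pi μ {r | v ∈ hitCascade H r S n}
      = Measure.pi ν {ρ | v ∈ hitCascade G ρ S n} := by
  rw [setOf_mem_hitCascade, setOf_mem_hitCascade, ← sum_measure_preimage_singleton _
      fun c _ => measurableSet_hitTraj_preimage hHm S c,
    ← sum_measure_preimage_singleton _ fun c _ => measurableSet_hitTraj_preimage hGm S c]
  exact sum_congr rfl fun c _ => measure_hitTraj_preimage_eq hH hG hHm hGm hHG S c

end HitLaw

section TriggerModel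

variable {α : Type*} [DecidableEq α]

def meetSet (C : Finset α) : Set (Finset α) := {A | (A ∩ C).Nonempty}

theorem meetSet_mono : Monotone (meetSet (α := α)) :=
  fun _ _ h _ hA => hA.mono (inter_subset_inter_left h)

variable [Fintype α]

theorem sum_triggerWeight {f : Finset α → ℝ} (hf0 : f ∅ = 0) :
    ∑ A, triggerWeight f A = 1 := by
  rw [← powerset_univ, sum_powerset_triggerWeight, compl_univ, hf0, sub_zero]

theorem sum_triggerWeight_meetSet {f : Finset α → ℝ} (hf0 : f ∅ = 0) (C : Finset α) :
    ∑ A ∈ univ.filter (· ∈ meetSet C), triggerWeight f A = f C := by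
  have hmiss : univ.filter (· ∉ meetSet C) = Cᶜ.powerset := by
    ext A
    simp [meetSet, not_nonempty_iff_eq_empty, ← disjoint_iff_inter_eq_empty,
      subset_compl_iff_disjoint_right]
  have := sum_filter_add_sum_filter_not univ (· ∈ meetSet C) (triggerWeight f)
  rw [hmiss, sum_powerset_triggerWeight, compl_compl, sum_triggerWeight hf0] at this
  linarith

def triggerMeasure (f : Finset α → ℝ) : Measure (Finset α) :=
  ∑ A, ENNReal.ofReal (triggerWeight f A) • Measure.dirac A

theorem triggerMeasure_apply (f : Finset α → ℝ) (s : Set (Finset α)) :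
    triggerMeasure f s = ∑ A ∈ univ.filter (· ∈ s), ENNReal.ofReal (triggerWeight f A) := by
  simp [triggerMeasure, Measure.dirac_apply, sum_filter, Set.indicator_apply]

variable {f : Finset α → ℝ}

theorem triggerMeasure_apply_of_nonneg (hw : ∀ A, 0 ≤ triggerWeight f A) (s : Set (Finset α)) :
    triggerMeasure f s = ENNReal.ofReal (∑ A ∈ univ.filter (· ∈ s), triggerWeight f A) := by
  rw [triggerMeasure_apply, ENNReal.ofReal_sum_of_nonneg fun A _ => hw A]

theorem isProbabilityMeasure_triggerMeasure (hw : ∀ A, 0 ≤ triggerWeight f A)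
    (hf0 : f ∅ = 0) : IsProbabilityMeasure (triggerMeasure f) :=
  ⟨by simp [triggerMeasure_apply_of_nonneg hw, sum_triggerWeight hf0]⟩

theorem triggerMeasure_meetSet (hw : ∀ A, 0 ≤ triggerWeight f A) (hf0 : f ∅ = 0)
    (C : Finset α) : triggerMeasure f (meetSet C) = ENNReal.ofReal (f C) := by
  rw [triggerMeasure_apply_of_nonneg hw, sum_triggerWeight_meetSet hf0]

theorem triggerMeasure_singleton (hw : ∀ A, 0 ≤ triggerWeight f A) (A : Finset α) :
    triggerMeasure f {A} = ENNReal.ofReal (triggerWeight f A) := by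
  simp [triggerMeasure_apply_of_nonneg hw, filter_eq']

def sources (ρ : α → Finset α) (v : α) (t : ℕ) : Finset α :=
  univ.filter fun s => v ∈ hitCascade (fun _ => meetSet) ρ {s} t

theorem mem_hitCascade_meetSet_iff (ρ : α → Finset α) (S : Finset α) (t : ℕ) (v : α) :
    v ∈ hitCascade (fun _ => meetSet) ρ S t ↔
      ∃ s ∈ S, v ∈ hitCascade (fun _ => meetSet) ρ {s} t := by
  induction t generalizing v with
  | zero => simp [hitCascade]
  | succ t ih =>
    simp only [hitCascade, mem_union, mem_filter, mem_univ, true_and, meetSet,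
      Set.mem_ofPred_eq, Finset.Nonempty, mem_inter, ih]
    aesop

theorem setOf_mem_hitCascade_meetSet (S : Finset α) (t : ℕ) (v : α) :
    {ρ | v ∈ hitCascade (fun _ => meetSet) ρ S t}
      = ↑(univ.filter fun ρ : α → Finset α => (S ∩ sources ρ v t).Nonempty) := by
  ext ρ
  rw [Set.mem_ofPred_eq, mem_hitCascade_meetSet_iff]
  simp [sources, Finset.Nonempty]

theorem measure_pi_triggerMeasure_toReal {f : α → Finset α → ℝ}
    (hw : ∀ u A, 0 ≤ triggerWeight (f u) A) (hf0 : ∀ u, f u ∅ = 0)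
    (E : Finset (α → Finset α)) :
    (Measure.pi (fun u => triggerMeasure (f u)) E).toReal
      = ∑ ρ ∈ E, ∏ u, triggerWeight (f u) (ρ u) := by
  have := fun u => isProbabilityMeasure_triggerMeasure (hw u) (hf0 u)
  rw [← sum_measure_singleton, ENNReal.toReal_sum fun _ _ => measure_ne_top _ _]
  refine sum_congr rfl fun ρ _ => ?_
  simp only [Measure.pi_singleton, triggerMeasure_singleton (hw _), ENNReal.toReal_prod,
    ENNReal.toReal_ofReal (hw _ _)]

end TriggerModel

instance : IsProbabilityMeasure (volume.restrict (Set.Icc (0 : ℝ) 1)) := ⟨by simp⟩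

theorem volume_restrict_Icc_Iic {a : ℝ} (h1 : a ≤ 1) :
    volume.restrict (Set.Icc 0 1) (Set.Iic a) = ENNReal.ofReal a := by
  have hset : Set.Iic a ∩ Set.Icc 0 1 = Set.Icc 0 a := by
    ext x
    simp only [Set.mem_inter_iff, Set.mem_Iic, Set.mem_Icc]
    constructor
    · rintro ⟨hxa, hx0, -⟩; exact ⟨hx0, hxa⟩
    · rintro ⟨hx0, hxa⟩; exact ⟨hxa, hx0, hxa.trans h1⟩
  rw [Measure.restrict_apply measurableSet_Iic, hset, Real.volume_Icc, sub_zero]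

theorem cascade_eq_hitCascade (gt : GTInstance V) (θ : V → ℝ) (S : Finset V) :
    cascade gt θ S = hitCascade (fun u C => Set.Iic (gt.f u C)) θ S := by
  funext t
  induction t with
  | zero => rfl
  | succ t ih => simp [cascade, hitCascade, ih]

theorem activationProb_eq_triggerMeasure (gt : GTInstance V)
    (hw : ∀ u A, 0 ≤ triggerWeight (gt.f u) A) (v : V) (S : Finset V) :
    activationProb gt v S = (Measure.pi (fun u => triggerMeasure (gt.f u))
      {ρ | v ∈ hitCascade (fun _ => meetSet) ρ S (Fintype.card V)}).toReal := by
  have := fun u => isProbabilityMeasure_triggerMeasure (hw u) (gt.f_empty u)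
  simp only [activationProb, finalSet, cascade_eq_hitCascade, cubeMeasure]
  rw [measure_mem_hitCascade_eq (fun u _ _ h => Set.Iic_subset_Iic.2 (gt.f_mono u h))
    (fun _ => meetSet_mono) (fun _ _ => measurableSet_Iic)
    (fun _ _ => (Set.toFinite _).measurableSet) fun u C => by
      rw [volume_restrict_Icc_Iic (gt.f_le_one u C), triggerMeasure_meetSet (hw u) (gt.f_empty u)]]

theorem activationProb_eq_sum (gt : GTInstance V)
    (hloc : ∀ v, IsADk (gt.f v) (Fintype.card V)) (v : V) (S : Finset V) :
    activationProb gt v S = ∑ ρ : V → Finset V, (∏ u, triggerWeight (gt.f u) (ρ u)) *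
      (if (S ∩ sources ρ v (Fintype.card V)).Nonempty then 1 else 0) := by
  have hw : ∀ u A, 0 ≤ triggerWeight (gt.f u) A := fun u =>
    triggerWeight_nonneg (hloc u) (gt.f_le_one u univ)
  rw [activationProb_eq_triggerMeasure gt hw, setOf_mem_hitCascade_meetSet,
    measure_pi_triggerMeasure_toReal hw gt.f_empty, sum_filter]
  exact sum_congr rfl fun ρ _ => by rw [mul_ite, mul_one, mul_zero]

/-- In the general threshold model on an arbitrary finite directed graph, if every
threshold function is AD-∞ (i.e. AD-`|V|`), then the spread function `σ` is AD-∞. -/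
theorem locally_ADinfty_implies_globally_ADinfty
    {V : Type*} [Fintype V] [DecidableEq V] (gt : GTInstance V)
    (hloc : ∀ v, IsADk (gt.f v) (Fintype.card V)) :
    IsADk (spread gt) (Fintype.card V) := by
  have hspread : spread gt = fun S => ∑ p : V × (V → Finset V),
      (∏ u, triggerWeight (gt.f u) (p.2 u)) *
        (if (S ∩ sources p.2 p.1 (Fintype.card V)).Nonempty then 1 else 0) := by
    funext S
    simp only [spread, activationProb_eq_sum gt hloc, Fintype.sum_prod_type]
  rw [hspread]
  exact isADk_sum _
    (fun p _ => prod_nonneg fun u _ => triggerWeight_nonneg (hloc u) (gt.f_le_one u univ) _)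
    fun p _ => isADk_ite_inter_nonempty _ _

end
end

section
/- Let V be a finite set and h : 2^V → [0,1] a set function. If Δ_A h(∅) ≥ 0 for every A ⊆ V, then Δ_A h(S) ≥ 0 for every S ⊆ V and every A ⊆ V \ S. -/
open MeasureTheory Finset
open scoped Classical

noncomputable section


lemma adDiff_insert_s15 {V : Type*} [DecidableEq V] (f : Finset V → ℝ) {x : V} {A : Finset V}
    (hx : x ∉ A) (S : Finset V) :
    adDiff f (insert x A) S = adDiff f A (insert x S) - adDiff f A S := by
  unfold adDiff
  rw [Finset.sum_powerset_insert hx]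
  have h1 : ∀ B ∈ A.powerset,
      (-1 : ℝ) ^ B.card * f (S ∪ (insert x A \ B)) =
      (-1 : ℝ) ^ B.card * f (insert x S ∪ (A \ B)) := by
    intro B hB
    rw [Finset.mem_powerset] at hB
    have hxB : x ∉ B := fun hc => hx (hB hc)
    congr 2
    rw [Finset.insert_sdiff_of_notMem _ hxB]
    ext y
    simp only [Finset.mem_union, Finset.mem_insert, Finset.mem_sdiff]
    tauto
  have h2 : ∀ B ∈ A.powerset,
      (-1 : ℝ) ^ (insert x B).card * f (S ∪ (insert x A \ insert x B)) =
      -((-1 : ℝ) ^ B.card * f (S ∪ (A \ B))) := by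
    intro B hB
    rw [Finset.mem_powerset] at hB
    have hxB : x ∉ B := fun hc => hx (hB hc)
    rw [Finset.card_insert_of_notMem hxB, pow_succ]
    have : insert x A \ insert x B = A \ B := by
      ext y
      simp only [Finset.mem_sdiff, Finset.mem_insert]
      constructor
      · rintro ⟨hy1 | hy1, hy2⟩
        · exact (hy2 (Or.inl hy1)).elim
        · exact ⟨hy1, fun hc => hy2 (Or.inr hc)⟩
      · rintro ⟨hy1, hy2⟩
        refine ⟨Or.inr hy1, ?_⟩
        rintro (rfl | hc)
        · exact hx hy1
        · exact hy2 hc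
    rw [this]
    ring
  rw [Finset.sum_congr rfl h1, Finset.sum_congr rfl h2, Finset.sum_neg_distrib]
  ring

/-- If all differences of `h : 2^V → [0,1]` at the empty set are nonnegative, then all
differences of `h` are nonnegative everywhere: `Δ_A h(S) ≥ 0` for every `S ⊆ V` and
every `A ⊆ V \ S`. -/
theorem diffs_nonneg_of_diffs_at_empty_nonneg
    {V : Type*} [Fintype V] [DecidableEq V]
    (h : Finset V → ℝ) (hh0 : ∀ S, 0 ≤ h S) (hh1 : ∀ S, h S ≤ 1)
    (hyp : ∀ A : Finset V, 0 ≤ adDiff h A ∅) :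
    ∀ S A : Finset V, Disjoint A S → 0 ≤ adDiff h A S := by
  intro S
  induction S using Finset.induction_on with
  | empty => intro A _; exact hyp A
  | @insert x S hxS ih =>
    intro A hA
    have hxA : x ∉ A := fun hc => (Finset.disjoint_left.mp hA hc) (Finset.mem_insert_self x S)
    have hAS : Disjoint A S :=
      Finset.disjoint_left.mpr fun {a} ha hc =>
        Finset.disjoint_left.mp hA ha (Finset.mem_insert_of_mem hc)
    have hAS' : Disjoint (insert x A) S := by
      rw [Finset.disjoint_left]
      intro a ha hc
      rcases Finset.mem_insert.mp ha with rfl | ha'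
      · exact hxS hc
      · exact Finset.disjoint_left.mp hAS ha' hc
    have key := adDiff_insert_s15 h hxA S
    have h1 := ih (insert x A) hAS'
    have h2 := ih A hAS
    linarith

end
end
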